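/- arXiv:0908.2583 — 11 statements merged into one kernel-verified Lean document; each statement's English description precedes it below -/
import Mathlib

section
/- Let G be a finite group, ρ a set of primes, X = E_ρ(G), and suppose C is a big connected component of the commuting graph Γ_X. If C contains an element x of prime order r, then C contains every element of G of order r. -/
open SimpleGraph

/-- The commuting graph on a subset `X` of a group `G`: vertices are the elements of `X`,
and two distinct vertices are adjacent iff they commute. -/
def commGraph {G : Type*} [Group G] (X : Set G) : SimpleGraph X where
  Adj a b := a ≠ b ∧ (a : G) * (b : G) = (b : G) * (a : G)
  symm := ⟨fun a b h => ⟨h.1.symm, h.2.symm⟩⟩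
  loopless := ⟨fun a h => h.1 rfl⟩

/-- The connected component of `x` in the commuting graph on `X`, viewed as a subset of `G`. -/
def compSet {G : Type*} [Group G] (X : Set G) (x : G) (hx : x ∈ X) : Set G :=
  {y : G | ∃ hy : y ∈ X, (commGraph X).Reachable ⟨x, hx⟩ ⟨y, hy⟩}

/-- The stabilizer `H_x` in `G` of the connected component of `x` in the commuting graph on `X`,
under the conjugation action. -/
def conjStab {G : Type*} [Group G] (X : Set G) (x : G) (hx : x ∈ X) : Set G :=
  {g : G | (fun y => g⁻¹ * y * g) '' compSet X x hx = compSet X x hx}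

/-- The set `E_ρ(G)` of elements of `G` whose order is a prime belonging to `ρ`. -/
def primeOrderElts (G : Type*) [Group G] (ρ : Set ℕ) : Set G :=
  {z : G | orderOf z ∈ ρ}

/-!
Let `z` have order `r` and let `P` be a Sylow `r`-subgroup containing `z`. Some conjugate `x'` of
`x` lies in `P`, and `x'` lies in `C` because `C` is invariant under conjugation. The centre of the
nontrivial `r`-group `P` contains an element `c` of order `r`, and `c` commutes with both `x'` and
`z`, so `x' — c — z` is a path in the commuting graph.
-/

section Sylow

variable {G : Type*} [Group G] {p : ℕ}

theorem IsPGroup.zpowers_of_orderOf_eq_pow {x : G} {n : ℕ} (hx : orderOf x = p ^ n) :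
    IsPGroup p (Subgroup.zpowers x) :=
  IsPGroup.of_card (by rw [Nat.card_zpowers, hx])

theorem Sylow.exists_conj_mem_of_orderOf_eq_pow [Fact p.Prime] [Finite G] (P : Sylow p G)
    {x : G} {n : ℕ} (hx : orderOf x = p ^ n) : ∃ g : G, g * x * g⁻¹ ∈ P := by
  obtain ⟨Q, hxQ⟩ := (IsPGroup.zpowers_of_orderOf_eq_pow hx).exists_le_sylow
  obtain ⟨g, rfl⟩ := MulAction.exists_smul_eq G Q P
  exact ⟨g, Subgroup.smul_mem_pointwise_smul x (MulAut.conj g) _ (hxQ (Subgroup.mem_zpowers x))⟩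

theorem IsPGroup.exists_orderOf_eq_forall_commute [Fact p.Prime] {P : Subgroup G} [Finite P]
    [Nontrivial P] (hP : IsPGroup p P) :
    ∃ c ∈ P, orderOf c = p ∧ ∀ y ∈ P, Commute c y := by
  have hdvd : p ∣ Nat.card (Subgroup.center P) := by
    have hZ : Nontrivial (Subgroup.center P) := hP.center_nontrivial
    exact ((hP.to_subgroup _).card_eq_or_dvd).resolve_left Finite.one_lt_card.ne'
  obtain ⟨c, hc⟩ := exists_prime_orderOf_dvd_card' p hdvd
  refine ⟨c, (c : P).2, by rw [Subgroup.orderOf_coe, Subgroup.orderOf_coe, hc], fun y hy => ?_⟩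
  exact congrArg Subtype.val (Subgroup.mem_center_iff.mp c.2 ⟨y, hy⟩).symm

end Sylow

section CommGraph

variable {G : Type*} [Group G] {X : Set G} {x : G} {hx : x ∈ X}

theorem mem_compSet_self : x ∈ compSet X x hx :=
  ⟨hx, Reachable.refl _⟩

theorem mem_compSet_of_commute {y w : G} (hy : y ∈ compSet X x hx) (hw : w ∈ X)
    (hyw : Commute y w) : w ∈ compSet X x hx := by
  obtain ⟨hyX, hxy⟩ := hy
  refine ⟨hw, hxy.trans ?_⟩
  by_cases h : (⟨y, hyX⟩ : X) = ⟨w, hw⟩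
  · rw [h]
  · exact Adj.reachable ⟨h, hyw⟩

theorem conj_mem_compSet
    (hbig : ∀ g : G, (fun y => g⁻¹ * y * g) '' compSet X x hx = compSet X x hx) (g : G) :
    g * x * g⁻¹ ∈ compSet X x hx := by
  rw [← hbig g⁻¹]
  exact ⟨x, mem_compSet_self, by simp only [inv_inv]⟩

end CommGraph

theorem mem_bigComponent_of_orderOf_eq_general
    {G : Type*} [Group G] [Finite G] (ρ : Set ℕ)
    (x : G) (hx : x ∈ primeOrderElts G ρ)
    (hbig : ∀ g : G,
      (fun y => g⁻¹ * y * g) '' compSet (primeOrderElts G ρ) x hx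
        = compSet (primeOrderElts G ρ) x hx)
    (r : ℕ) (hr : r.Prime) (hxr : orderOf x = r) :
    ∀ z : G, orderOf z = r → z ∈ compSet (primeOrderElts G ρ) x hx := by
  intro z hz
  have : Fact r.Prime := ⟨hr⟩
  have mem_X : ∀ y : G, orderOf y = r → y ∈ primeOrderElts G ρ := fun y hy =>
    show orderOf y ∈ ρ from hy ▸ hxr ▸ hx
  obtain ⟨P, hzP⟩ :=
    (IsPGroup.zpowers_of_orderOf_eq_pow (n := 1) (by rw [hz, pow_one])).exists_le_sylow
  replace hzP : z ∈ P := hzP (Subgroup.mem_zpowers z)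
  obtain ⟨g, hgx⟩ := P.exists_conj_mem_of_orderOf_eq_pow (n := 1) (by rw [hxr, pow_one])
  have : Nontrivial P := (Subgroup.nontrivial_iff_exists_ne_one _).mpr
    ⟨z, hzP, fun h => hr.one_lt.ne' (by rw [← hz, h, orderOf_one])⟩
  obtain ⟨c, -, hc, hc_comm⟩ := P.isPGroup'.exists_orderOf_eq_forall_commute
  have hcC := mem_compSet_of_commute (conj_mem_compSet hbig g) (mem_X c hc) (hc_comm _ hgx).symm
  exact mem_compSet_of_commute hcC (mem_X z hz) (hc_comm z hzP)

/-- Let `ρ` be a set of primes and `X = E_ρ(G)`. If a big connected component `C` of the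
commuting graph on `X` contains an element `x` of prime order `r`, then `C` contains every
element of `G` of order `r`. Here `C` is realized as the connected component of `x`, and
bigness means invariance under the conjugation action of `G`. -/
theorem mem_bigComponent_of_orderOf_eq
    {G : Type*} [Group G] [Finite G] (ρ : Set ℕ) (hρ : ∀ p ∈ ρ, p.Prime)
    (x : G) (hx : x ∈ primeOrderElts G ρ)
    (hbig : ∀ g : G,
      (fun y => g⁻¹ * y * g) '' compSet (primeOrderElts G ρ) x hx
        = compSet (primeOrderElts G ρ) x hx)
    (r : ℕ) (hr : r.Prime) (hxr : orderOf x = r) :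
    ∀ z : G, orderOf z = r → z ∈ compSet (primeOrderElts G ρ) x hx :=
  mem_bigComponent_of_orderOf_eq_general ρ x hx hbig r hr hxr
end

section
/- Let G be a finite group and X a nonempty conjugation-invariant subset of O such that the commuting graph Γ_X is connected. Then there exists a set ρ of odd prime divisors of |G|, containing the order of every element of X, such that E_ρ(G) is exactly the connected component of Γ_O containing X. In particular, every big connected component of Γ_O is of the form E_ρ(G) for some set ρ of odd primes. -/
open SimpleGraph

/-- The set `O` of elements of odd prime order in `G`. -/
def oddPrimeOrderElts (G : Type*) [Group G] : Set G :=
  {x : G | (orderOf x).Prime ∧ Odd (orderOf x)}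

/-!
Let `C` be the component of `Γ_O` containing the connected set `X`, and `ρ` the set of orders of
elements of `C`, so that `C ⊆ E_ρ(G)`. Conjugation permutes the components of `Γ_O` and fixes `X`,
hence fixes `C`. If `y` has the same prime order `p` as some `z ∈ C`, choose a Sylow `p`-subgroup
`P` containing `y` and a conjugate `z'` of `z`: a central element of order `p` of `P` commutes with
both, so `y` is joined to `z' ∈ C`.
-/

section Sylow

variable {G : Type*} [Group G] {p : ℕ}

theorem IsPGroup.exists_mem_center_orderOf_eq [Fact p.Prime] [Finite G] [Nontrivial G]
    (hG : IsPGroup p G) :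
    ∃ w ∈ Subgroup.center G, orderOf w = p := by
  have := hG.center_nontrivial
  obtain ⟨n, hn, hcard⟩ := (hG.to_subgroup _).nontrivial_iff_card.mp this
  obtain ⟨w, hw⟩ := exists_prime_orderOf_dvd_card' (G := Subgroup.center G) p
    (hcard ▸ dvd_pow_self p hn.ne')
  exact ⟨w, w.2, by rw [Subgroup.orderOf_coe, hw]⟩

theorem Sylow.exists_mem_of_orderOf_eq [Finite G] {z : G} (hz : orderOf z = p) :
    ∃ P : Sylow p G, z ∈ P := by
  have hpz : IsPGroup p (Subgroup.zpowers z) :=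
    IsPGroup.of_card (by rw [Nat.card_zpowers, hz, pow_one])
  obtain ⟨P, hP⟩ := hpz.exists_le_sylow
  exact ⟨P, hP (Subgroup.mem_zpowers z)⟩

theorem Sylow.exists_conj_mem [Fact p.Prime] [Finite (Sylow p G)] (P Q : Sylow p G) {z : G}
    (hz : z ∈ Q) :
    ∃ g : G, g⁻¹ * z * g ∈ P := by
  obtain ⟨g, rfl⟩ := MulAction.exists_smul_eq G Q P
  refine ⟨g⁻¹, ?_⟩
  rw [inv_inv]
  exact Subgroup.smul_mem_pointwise_smul z (MulAut.conj g) (Q : Subgroup G) hz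

theorem exists_commute_conj_of_orderOf_eq [Fact p.Prime] [Finite G] {y z : G}
    (hy : orderOf y = p) (hz : orderOf z = p) :
    ∃ g w : G, orderOf w = p ∧ Commute w y ∧ Commute w (g⁻¹ * z * g) := by
  obtain ⟨P, hyP⟩ := Sylow.exists_mem_of_orderOf_eq hy
  obtain ⟨Q, hzQ⟩ := Sylow.exists_mem_of_orderOf_eq hz
  obtain ⟨g, hzgP⟩ := P.exists_conj_mem Q hzQ
  have hy1 : y ≠ 1 := by
    rintro rfl
    exact (Fact.out : p.Prime).one_lt.ne' (hy ▸ orderOf_one)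
  have : Nontrivial P := ⟨⟨⟨y, hyP⟩, 1, fun h => hy1 (congrArg Subtype.val h)⟩⟩
  obtain ⟨w, hw, hwp⟩ := P.isPGroup'.exists_mem_center_orderOf_eq
  refine ⟨g, w, by rw [Subgroup.orderOf_coe, hwp], ?_, ?_⟩
  · exact congrArg Subtype.val (Subgroup.mem_center_iff.mp hw ⟨y, hyP⟩).symm
  · exact congrArg Subtype.val (Subgroup.mem_center_iff.mp hw ⟨_, hzgP⟩).symm

end Sylow

section CommGraph

variable {G : Type*} [Group G]

theorem commGraph_reachable_of_commute {S : Set G} {a b : S} (h : Commute (a : G) b) :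
    (commGraph S).Reachable a b := by
  by_cases hab : a = b
  · exact hab ▸ Reachable.refl a
  · exact Adj.reachable ⟨hab, h⟩

def commGraphMap {H : Type*} [Group H] (f : G →* H) (hf : Function.Injective f) {S : Set G}
    {T : Set H} (hST : Set.MapsTo f S T) : commGraph S →g commGraph T where
  toFun a := ⟨f a, hST a.2⟩
  map_rel' {a b} h := ⟨fun hab => h.1 (Subtype.ext (hf (congrArg Subtype.val hab))),
    by simp only [← map_mul, h.2]⟩

theorem commGraph_reachable_mono {S T : Set G} (hST : S ⊆ T) {a b : S}
    (h : (commGraph S).Reachable a b) :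
    (commGraph T).Reachable ⟨a, hST a.2⟩ ⟨b, hST b.2⟩ :=
  h.map (commGraphMap (MonoidHom.id G) Function.injective_id hST)

theorem commGraph_reachable_conj {S : Set G} (hS : ∀ s ∈ S, ∀ g : G, g⁻¹ * s * g ∈ S) (g : G)
    {a b : S} (h : (commGraph S).Reachable a b) :
    (commGraph S).Reachable ⟨g⁻¹ * a * g, hS a a.2 g⟩ ⟨g⁻¹ * b * g, hS b b.2 g⟩ := by
  have hmaps : Set.MapsTo (MulAut.conj g⁻¹) S S := fun s hs => by
    simpa [MulAut.conj_apply] using hS s hs g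
  simpa [commGraphMap, MulAut.conj_apply] using
    h.map (commGraphMap (MulAut.conj g⁻¹).toMonoidHom (MulAut.conj g⁻¹).injective hmaps)

theorem self_mem_compSet {S : Set G} {x : G} (hx : x ∈ S) : x ∈ compSet S x hx :=
  ⟨hx, Reachable.refl _⟩

theorem compSet_eq_of_reachable {S : Set G} {x x' : G} {hx : x ∈ S} {hx' : x' ∈ S}
    (h : (commGraph S).Reachable ⟨x, hx⟩ ⟨x', hx'⟩) : compSet S x hx = compSet S x' hx' := by
  ext y
  exact ⟨fun ⟨hy, hr⟩ => ⟨hy, h.symm.trans hr⟩, fun ⟨hy, hr⟩ => ⟨hy, h.trans hr⟩⟩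

theorem conj_mem_compSet_s3 {S : Set G} (hS : ∀ s ∈ S, ∀ g : G, g⁻¹ * s * g ∈ S) {x z g : G}
    {hx : x ∈ S} (hxg : g⁻¹ * x * g ∈ compSet S x hx) (hz : z ∈ compSet S x hx) :
    g⁻¹ * z * g ∈ compSet S x hx :=
  ⟨hS z hz.1 g, hxg.2.trans (commGraph_reachable_conj hS g hz.2)⟩

theorem mem_compSet_of_orderOf_eq [Finite G] {S : Set G}
    (hS : ∀ a ∈ S, ∀ b : G, orderOf b = orderOf a → b ∈ S) {x y z : G} {hx : x ∈ S}
    (hC : ∀ g : G, g⁻¹ * x * g ∈ compSet S x hx) (hz : z ∈ compSet S x hx)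
    (hp : (orderOf z).Prime) (hyz : orderOf y = orderOf z) : y ∈ compSet S x hx := by
  have := Fact.mk hp
  have hSconj : ∀ s ∈ S, ∀ g : G, g⁻¹ * s * g ∈ S := fun s hs g =>
    hS s hs _ (by simpa [MulAut.conj_apply] using (MulAut.conj g⁻¹).orderOf_eq s)
  obtain ⟨g, w, hw, hwy, hwz⟩ := exists_commute_conj_of_orderOf_eq hyz rfl
  obtain ⟨hzgS, hzg⟩ := conj_mem_compSet_s3 hSconj (hC g) hz
  have hwS : w ∈ S := hS z hz.1 w hw
  have hyS : y ∈ S := hS z hz.1 y hyz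
  have hreach_zw : (commGraph S).Reachable ⟨_, hzgS⟩ ⟨w, hwS⟩ :=
    commGraph_reachable_of_commute hwz.symm
  have hreach_wy : (commGraph S).Reachable ⟨w, hwS⟩ ⟨y, hyS⟩ :=
    commGraph_reachable_of_commute hwy
  exact ⟨hyS, hzg.trans (hreach_zw.trans hreach_wy)⟩

end CommGraph

theorem bigComponent_eq_primeOrderElts_general
    {G : Type*} [Group G] [Finite G] (X : Set G)
    (hXO : X ⊆ oddPrimeOrderElts G)
    (hconj : ∀ x ∈ X, ∀ g : G, g⁻¹ * x * g ∈ X)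
    (hconn : (commGraph X).Connected) :
    ∃ ρ : Set ℕ,
      (∀ p ∈ ρ, p.Prime ∧ Odd p ∧ p ∣ Nat.card G) ∧
      (∀ x ∈ X, orderOf x ∈ ρ) ∧
      ∀ x, ∀ hx : x ∈ X,
        compSet (oddPrimeOrderElts G) x (hXO hx) = {y : G | orderOf y ∈ ρ} := by
  set O := oddPrimeOrderElts G
  have hO : ∀ a ∈ O, ∀ b : G, orderOf b = orderOf a → b ∈ O := fun a ha b hb =>
    show (orderOf b).Prime ∧ Odd (orderOf b) from hb ▸ ha
  have hcomp : ∀ x (hx : x ∈ X) x' (hx' : x' ∈ X),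
      compSet O x (hXO hx) = compSet O x' (hXO hx') := fun x hx x' hx' =>
    compSet_eq_of_reachable (commGraph_reachable_mono hXO (hconn.preconnected ⟨x, hx⟩ ⟨x', hx'⟩))
  refine ⟨{p | ∃ x, ∃ hx : x ∈ X, ∃ y ∈ compSet O x (hXO hx), orderOf y = p}, ?_, ?_, ?_⟩
  · rintro p ⟨x, hx, y, ⟨hy, -⟩, rfl⟩
    exact ⟨hy.1, hy.2, orderOf_dvd_natCard y⟩
  · exact fun x hx => ⟨x, hx, x, self_mem_compSet _, rfl⟩
  · intro x hx
    ext y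
    refine ⟨fun hy => ⟨x, hx, y, hy, rfl⟩, ?_⟩
    rintro ⟨x', hx', z, hz, hzy⟩
    rw [hcomp x' hx' x hx] at hz
    have hC : ∀ g : G, g⁻¹ * x * g ∈ compSet O x (hXO hx) := fun g =>
      hcomp _ (hconj x hx g) x hx ▸ self_mem_compSet _
    exact mem_compSet_of_orderOf_eq hO hC hz hz.1.1 hzy.symm

/-- Let `G` be a finite group and `X` a nonempty conjugation-invariant subset of the set `O`
of elements of odd prime order, such that the commuting graph on `X` is connected. Then there
is a set `ρ` of odd prime divisors of `|G|` containing the order of every element of `X`,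
such that `E_ρ(G) = {y | orderOf y ∈ ρ}` is exactly the connected component of the commuting
graph `Γ_O` containing `X`. -/
theorem bigComponent_eq_primeOrderElts
    {G : Type*} [Group G] [Finite G] (X : Set G)
    (hne : X.Nonempty)
    (hXO : X ⊆ oddPrimeOrderElts G)
    (hconj : ∀ x ∈ X, ∀ g : G, g⁻¹ * x * g ∈ X)
    (hconn : (commGraph X).Connected) :
    ∃ ρ : Set ℕ,
      (∀ p ∈ ρ, p.Prime ∧ Odd p ∧ p ∣ Nat.card G) ∧
      (∀ x ∈ X, orderOf x ∈ ρ) ∧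
      ∀ x, ∀ hx : x ∈ X,
        compSet (oddPrimeOrderElts G) x (hXO hx) = {y : G | orderOf y ∈ ρ} :=
  bigComponent_eq_primeOrderElts_general X hXO hconj hconn
end

section
/- Let G be a finite group, p a prime dividing |G|, and P a Sylow p-subgroup of G. The following three statements are equivalent: (a) the commuting graph Γ_p on the set of elements of G of order p is connected; (b) G has no strongly p-embedded subgroup; (c) G = ⟨ N_G(Y) : Y a nontrivial subgroup of P ⟩. -/
/-!
Fix an element `z` of order `p` in the centre of `P`, and let `H` be the stabilizer, under
conjugation, of the connected component of `z` in `Γ_p`. Two elements of order `p` of a common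
`p`-subgroup are joined through a central element of order `p` of that subgroup. As every element
of order `p` lies in a conjugate of `P`, `Γ_p` is connected iff `H = G`; as `P` is a Sylow subgroup
of `H`, every element of order `p` of `H` lies in the component of `z`, so a proper `H` is strongly
`p`-embedded. Conversely, if `U` is strongly `p`-embedded and `x ∈ U` has order `p`, the component
of `x` stays inside `U` while some conjugate of `x` does not.

The normalizers of the nontrivial subgroups of `P` stabilize the component of `z`. If `Γ_p` is
connected, walking along commuting edges shows that every element of order `p`, and then every
conjugate of `P`, is conjugated into `P` by the subgroup `M` these normalizers generate, so
`M = G`. Each step uses that every nontrivial `Q ≤ P` has an `M`-conjugate `Q' ≤ P` for which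
`P ∩ N_G(Q')` is a maximal `p`-subgroup of `N_G(Q')`: one maximizing `|P ∩ N_G(Q')|`.
-/

open SimpleGraph

/-- A subgroup `U` of `G` is strongly `p`-embedded if `U ≠ G`, `p` divides `|U|`, and
`p` does not divide `|U ∩ g⁻¹Ug|` for every `g ∈ G \ U`. -/
def IsStronglyPEmbedded {G : Type*} [Group G] (p : ℕ) (U : Subgroup G) : Prop :=
  U ≠ ⊤ ∧ p ∣ Nat.card U ∧
    ∀ g : G, g ∉ U → ¬ p ∣ Nat.card ((U : Set G) ∩ ((fun y => g⁻¹ * y * g) '' (U : Set G)) : Set G)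

open Pointwise

section

variable {G : Type*} [Group G] {p : ℕ}

theorem Subgroup.card_conj_smul (g : G) (Q : Subgroup G) :
    Nat.card ↥(MulAut.conj g • Q) = Nat.card Q := by
  rw [Subgroup.pointwise_smul_def]
  exact Subgroup.card_map_of_injective (MulAut.conj g).injective

theorem Subgroup.normalizer_conj_smul (g : G) (Q : Subgroup G) :
    Subgroup.normalizer (↑(MulAut.conj g • Q) : Set G) =
      MulAut.conj g • Subgroup.normalizer (Q : Set G) := by
  rw [Subgroup.pointwise_smul_def, Subgroup.pointwise_smul_def]
  exact (Subgroup.map_equiv_normalizer_eq Q (MulAut.conj g)).symm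

theorem Subgroup.conj_smul_zpowers (g x : G) :
    MulAut.conj g • Subgroup.zpowers x = Subgroup.zpowers (MulAut.conj g x) := by
  rw [Subgroup.pointwise_smul_def]
  exact MonoidHom.map_zpowers _ x

theorem Subgroup.conj_smul_ne_bot {Q : Subgroup G} (g : G) (hQ : Q ≠ ⊥) :
    MulAut.conj g • Q ≠ ⊥ := by
  rw [← Subgroup.smul_bot (MulAut.conj g)]
  exact (MulAction.injective _).ne hQ

theorem IsPGroup.conj_smul {Q : Subgroup G} (hQ : IsPGroup p Q) (g : G) :
    IsPGroup p ↥(MulAut.conj g • Q) := by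
  rw [Subgroup.pointwise_smul_def]
  exact hQ.map _

theorem Subgroup.le_normalizer_zpowers_of_forall_commute {x : G} {S : Subgroup G}
    (h : ∀ s ∈ S, Commute x s) :
    S ≤ Subgroup.normalizer (Subgroup.zpowers x : Set G) := fun s hs =>
  Subgroup.centralizer_le_normalizer _ <| Subgroup.mem_centralizer_iff.mpr fun y hy => by
    obtain ⟨k, rfl⟩ := Subgroup.mem_zpowers_iff.mp hy
    exact ((h s hs).zpow_left k).eq

theorem isPGroup_zpowers_of_orderOf_eq {x : G} (hx : orderOf x = p) :
    IsPGroup p (Subgroup.zpowers x) :=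
  IsPGroup.of_card (n := 1) (by rw [Nat.card_zpowers, hx, pow_one])

theorem zpowers_ne_bot_of_orderOf_eq_prime {x : G} (hp : p.Prime) (hx : orderOf x = p) :
    Subgroup.zpowers x ≠ ⊥ := by
  rw [Ne, Subgroup.zpowers_eq_bot]
  rintro rfl
  exact hp.ne_one (hx.symm.trans orderOf_one)

section

variable [Finite G] [Fact p.Prime]

theorem Subgroup.prime_dvd_card_iff_exists_orderOf_eq (K : Subgroup G) :
    p ∣ Nat.card K ↔ ∃ x ∈ K, orderOf x = p := by
  refine ⟨fun h => ?_, fun ⟨x, hxK, hx⟩ => hx ▸ K.orderOf_dvd_natCard hxK⟩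
  obtain ⟨x, hx⟩ := exists_prime_orderOf_dvd_card' p h
  exact ⟨x, x.2, by rwa [Subgroup.orderOf_coe]⟩

theorem IsPGroup.exists_orderOf_eq_forall_commute_s7 {Q : Subgroup G} (hQ : IsPGroup p Q)
    (hQ₁ : Q ≠ ⊥) : ∃ z ∈ Q, orderOf z = p ∧ ∀ q ∈ Q, Commute z q := by
  have := (Subgroup.nontrivial_iff_ne_bot Q).mpr hQ₁
  have := hQ.center_nontrivial
  obtain ⟨c, hc⟩ := exists_prime_orderOf_dvd_card' (G := Subgroup.center Q) p
    ((hQ.to_subgroup _).card_eq_or_dvd.resolve_left Finite.one_lt_card.ne')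
  refine ⟨c, (c : Q).2, by rwa [Subgroup.orderOf_coe, Subgroup.orderOf_coe], fun q hq => ?_⟩
  exact congrArg Subtype.val (Subgroup.mem_center_iff.mp c.2 ⟨q, hq⟩).symm

theorem IsPGroup.exists_mem_conj_smul_le {K R S : Subgroup G} (hR : IsPGroup p R) (hRK : R ≤ K)
    (hS : IsPGroup p S) (hSK : S ≤ K) :
    ∃ k ∈ K, ∃ T ≤ K, IsPGroup p T ∧ R ≤ T ∧ MulAut.conj k • S ≤ T := by
  obtain ⟨TR, hRT⟩ := (hR.comap_subtype (K := K)).exists_le_sylow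
  obtain ⟨TS, hST⟩ := (hS.comap_subtype (K := K)).exists_le_sylow
  obtain ⟨k, rfl⟩ := MulAction.exists_smul_eq K TS TR
  refine ⟨k, k.2, ((k • TS : Sylow p K) : Subgroup K).map K.subtype, Subgroup.map_subtype_le _,
    (k • TS).2.map _, fun r hr => ⟨⟨r, hRK hr⟩, hRT hr, rfl⟩, ?_⟩
  rintro _ ⟨s, hs, rfl⟩
  refine ⟨MulAut.conj k ⟨s, hSK hs⟩, ?_, rfl⟩
  rw [Sylow.coe_subgroup_smul]
  exact Subgroup.smul_mem_pointwise_smul _ _ _ (hST hs)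

theorem Sylow.exists_mem_conj_smul_le (P : Sylow p G) {K S : Subgroup G}
    (hPK : (P : Subgroup G) ≤ K) (hS : IsPGroup p S) (hSK : S ≤ K) :
    ∃ k ∈ K, MulAut.conj k • S ≤ P := by
  obtain ⟨k, hk, T, -, hT, hPT, hST⟩ := P.2.exists_mem_conj_smul_le hPK hS hSK
  exact ⟨k, hk, P.3 hT hPT ▸ hST⟩

theorem isStronglyPEmbedded_iff {U : Subgroup G} :
    IsStronglyPEmbedded p U ↔ U ≠ ⊤ ∧ (∃ x ∈ U, orderOf x = p) ∧
      ∀ g x, x ∈ U → orderOf x = p → MulAut.conj g x ∈ U → g ∈ U := by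
  have hconj (g : G) :
      (U : Set G) ∩ (fun y => g⁻¹ * y * g) '' U = ↑(U ⊓ MulAut.conj g⁻¹ • U) := by
    ext x
    simp [Set.mem_smul_set, MulAut.smul_def]
  have hmem (g x : G) : x ∈ MulAut.conj g⁻¹ • U ↔ MulAut.conj g x ∈ U := by
    rw [Subgroup.mem_pointwise_smul_iff_inv_smul_mem, ← map_inv, inv_inv, MulAut.smul_def]
  simp only [IsStronglyPEmbedded, hconj, SetLike.coe_sort_coe,
    Subgroup.prime_dvd_card_iff_exists_orderOf_eq]
  simp only [Subgroup.mem_inf, hmem]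
  refine and_congr_right' (and_congr_right' ⟨fun h g x hx hxp hgx => ?_, ?_⟩)
  · by_contra hg
    exact h g hg ⟨x, ⟨hx, hgx⟩, hxp⟩
  · rintro h g hg ⟨x, ⟨hx, hgx⟩, hxp⟩
    exact hg (h g x hx hxp hgx)

end

def CommReachable (p : ℕ) (x y : G) : Prop :=
  ∃ (hx : orderOf x = p) (hy : orderOf y = p),
    (commGraph {x : G | orderOf x = p}).Reachable ⟨x, hx⟩ ⟨y, hy⟩

namespace CommReachable

variable {x y z : G}

theorem refl (hx : orderOf x = p) : CommReachable p x x := ⟨hx, hx, .rfl⟩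

theorem symm : CommReachable p x y → CommReachable p y x
  | ⟨hx, hy, h⟩ => ⟨hy, hx, h.symm⟩

theorem trans : CommReachable p x y → CommReachable p y z → CommReachable p x z
  | ⟨hx, _, h⟩, ⟨_, hz, h'⟩ => ⟨hx, hz, h.trans h'⟩

theorem of_commute (hx : orderOf x = p) (hy : orderOf y = p) (h : Commute x y) :
    CommReachable p x y := by
  by_cases hxy : x = y
  · exact hxy ▸ refl hx
  · exact ⟨hx, hy, SimpleGraph.Adj.reachable ⟨fun h' => hxy (congrArg Subtype.val h'), h⟩⟩

theorem conj (g : G) : CommReachable p x y →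
    CommReachable p (MulAut.conj g x) (MulAut.conj g y)
  | ⟨hx, hy, h⟩ => by
    let f : commGraph {x : G | orderOf x = p} →g commGraph {x : G | orderOf x = p} :=
      { toFun := fun v => ⟨MulAut.conj g v, ((MulAut.conj g).orderOf_eq v).trans v.2⟩
        map_rel' := fun {u v} huv => ⟨fun h' => huv.1 <| Subtype.ext <|
            (MulAut.conj g).injective (congrArg Subtype.val h'),
          by simp only [← map_mul, huv.2]⟩ }
    exact ⟨_, _, h.map f⟩

theorem conj_iff (g : G) :
    CommReachable p (MulAut.conj g x) (MulAut.conj g y) ↔ CommReachable p x y := by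
  refine ⟨fun h => ?_, conj g⟩
  simpa only [← MulAut.mul_apply, ← map_mul, inv_mul_cancel, map_one, MulAut.one_apply]
    using h.conj g⁻¹

@[elab_as_elim]
theorem induction {C : G → Prop}
    (step : ∀ u v, orderOf u = p → orderOf v = p → Commute u v → C u → C v)
    (h : CommReachable p x y) (hx : C x) : C y := by
  obtain ⟨hx', hy', h⟩ := h
  suffices ∀ v, Relation.ReflTransGen (commGraph _).Adj ⟨x, hx'⟩ v → C v.1 from
    this _ ((SimpleGraph.reachable_iff_reflTransGen _ _).mp h)
  intro v hv
  induction hv with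
  | refl => exact hx
  | @tail u w _ huv ih => exact step _ _ u.2 w.2 huv.2 ih

theorem of_mem_isPGroup [Finite G] [Fact p.Prime] {Q : Subgroup G} (hQ : IsPGroup p Q)
    (hxQ : x ∈ Q) (hyQ : y ∈ Q) (hx : orderOf x = p) (hy : orderOf y = p) :
    CommReachable p x y := by
  obtain ⟨z, hzQ, hz, hzc⟩ := hQ.exists_orderOf_eq_forall_commute_s7 <|
    ne_bot_of_le_ne_bot (zpowers_ne_bot_of_orderOf_eq_prime Fact.out hx)
      (Subgroup.zpowers_le.mpr hxQ)
  exact (of_commute hx hz (hzc x hxQ).symm).trans (of_commute hz hy (hzc y hyQ))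

end CommReachable

theorem connected_commGraph_iff :
    (commGraph {x : G | orderOf x = p}).Connected ↔
      ∃ z : G, orderOf z = p ∧ ∀ y, orderOf y = p → CommReachable p z y := by
  refine ⟨fun h => ?_, fun ⟨z, hz, h⟩ => ?_⟩
  · obtain ⟨⟨z, hz⟩⟩ := h.nonempty
    exact ⟨z, hz, fun y hy => ⟨hz, hy, h.preconnected _ _⟩⟩
  · refine (SimpleGraph.connected_iff _).mpr ⟨fun a b => ?_, ⟨⟨z, hz⟩⟩⟩
    obtain ⟨_, _, hab⟩ := (h a a.2).symm.trans (h b b.2)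
    exact hab

theorem SimpleGraph.Connected.commReachable (h : (commGraph {x : G | orderOf x = p}).Connected)
    {x y : G} (hx : orderOf x = p) (hy : orderOf y = p) : CommReachable p x y :=
  ⟨hx, hy, h.preconnected _ _⟩

theorem IsStronglyPEmbedded.not_connected [Finite G] [Fact p.Prime] {U : Subgroup G}
    (hU : IsStronglyPEmbedded p U) : ¬ (commGraph {x : G | orderOf x = p}).Connected := by
  obtain ⟨hU_ne_top, ⟨x, hxU, hx⟩, hU_conj⟩ := isStronglyPEmbedded_iff.mp hU
  obtain ⟨g, hg⟩ : ∃ g, g ∉ U := by simpa [Subgroup.eq_top_iff'] using hU_ne_top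
  have hcomp (y : G) (hxy : CommReachable p x y) : y ∈ U :=
    hxy.induction (fun u v hu _ huv huU => hU_conj v u huU hu <| by
      rwa [MulAut.conj_apply, huv.symm.mul_inv_cancel]) hxU
  intro hconn
  exact hg <| hU_conj g x hxU hx <| hcomp _ <| hconn.commReachable hx <| by
    rwa [MulEquiv.orderOf_eq]

def componentStabilizer (p : ℕ) (z : G) : Subgroup G where
  carrier := {g | ∀ y, CommReachable p z y ↔ CommReachable p z (MulAut.conj g y)}
  one_mem' y := by rw [map_one, MulAut.one_apply]
  mul_mem' {a b} ha hb y := by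
    rw [map_mul, MulAut.mul_apply]
    exact (hb y).trans (ha _)
  inv_mem' {a} ha y := by
    simpa only [← MulAut.mul_apply, ← map_mul, mul_inv_cancel, map_one, MulAut.one_apply]
      using (ha (MulAut.conj a⁻¹ y)).symm

section

variable {z : G}

theorem mem_componentStabilizer_iff (hz : orderOf z = p) {g : G} :
    g ∈ componentStabilizer p z ↔ CommReachable p z (MulAut.conj g z) :=
  ⟨fun h => (h z).mp (.refl hz),
    fun h _ => (CommReachable.conj_iff g).symm.trans ⟨h.trans, h.symm.trans⟩⟩

theorem le_componentStabilizer {Q : Subgroup G} (hz : orderOf z = p)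
    (hzc : ∀ q ∈ Q, Commute z q) : Q ≤ componentStabilizer p z := fun g hg =>
  (mem_componentStabilizer_iff hz).mpr <| by
    rw [MulAut.conj_apply, (hzc g hg).symm.mul_inv_cancel]
    exact .refl hz

variable [Finite G] [Fact p.Prime] (P : Sylow p G)

theorem connected_iff_componentStabilizer_eq_top (hzP : z ∈ (P : Subgroup G))
    (hz : orderOf z = p) :
    (commGraph {x : G | orderOf x = p}).Connected ↔ componentStabilizer p z = ⊤ := by
  refine ⟨fun h => (Subgroup.eq_top_iff' _).mpr fun g => (mem_componentStabilizer_iff hz).mpr <|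
    h.commReachable hz (by rwa [MulEquiv.orderOf_eq]), fun h => ?_⟩
  refine connected_commGraph_iff.mpr ⟨z, hz, fun y hy => ?_⟩
  obtain ⟨Q, hyQ⟩ := (isPGroup_zpowers_of_orderOf_eq hy).exists_le_sylow
  obtain ⟨g, rfl⟩ := MulAction.exists_smul_eq G P Q
  have hgz : MulAut.conj g z ∈ ((g • P : Sylow p G) : Subgroup G) := by
    rw [Sylow.coe_subgroup_smul]
    exact Subgroup.smul_mem_pointwise_smul _ _ _ hzP
  exact ((mem_componentStabilizer_iff hz).mp ((Subgroup.eq_top_iff' _).mp h g)).trans <|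
    .of_mem_isPGroup (g • P).2 hgz (hyQ (Subgroup.mem_zpowers y))
      (by rwa [MulEquiv.orderOf_eq]) hy

theorem CommReachable.of_mem_componentStabilizer (hzP : z ∈ (P : Subgroup G)) (hz : orderOf z = p)
    (hzc : ∀ q ∈ (P : Subgroup G), Commute z q) {x : G} (hxH : x ∈ componentStabilizer p z)
    (hx : orderOf x = p) : CommReachable p z x := by
  obtain ⟨k, hkH, hkx⟩ := P.exists_mem_conj_smul_le (le_componentStabilizer hz hzc)
    (isPGroup_zpowers_of_orderOf_eq hx) (Subgroup.zpowers_le.mpr hxH)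
  have hkxP : MulAut.conj k x ∈ (P : Subgroup G) :=
    hkx (Subgroup.smul_mem_pointwise_smul _ _ _ (Subgroup.mem_zpowers x))
  have hzkx : CommReachable p z (MulAut.conj k x) :=
    .of_mem_isPGroup P.2 hzP hkxP hz (by rwa [MulEquiv.orderOf_eq])
  exact (CommReachable.conj_iff k).mp (((mem_componentStabilizer_iff hz).mp hkH).symm.trans hzkx)

theorem isStronglyPEmbedded_componentStabilizer (hzP : z ∈ (P : Subgroup G)) (hz : orderOf z = p)
    (hzc : ∀ q ∈ (P : Subgroup G), Commute z q) (hne : componentStabilizer p z ≠ ⊤) :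
    IsStronglyPEmbedded p (componentStabilizer p z) := by
  refine isStronglyPEmbedded_iff.mpr
    ⟨hne, ⟨z, le_componentStabilizer hz hzc hzP, hz⟩, fun g x hxH hx hgxH => ?_⟩
  have hzx := CommReachable.of_mem_componentStabilizer P hzP hz hzc hxH hx
  have hzgx := CommReachable.of_mem_componentStabilizer P hzP hz hzc hgxH
    (by rwa [MulEquiv.orderOf_eq])
  exact (mem_componentStabilizer_iff hz).mpr (hzgx.trans (hzx.conj g).symm)

end

theorem connected_iff_not_exists_isStronglyPEmbedded [Finite G] [Fact p.Prime] (P : Sylow p G)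
    (hP : (P : Subgroup G) ≠ ⊥) :
    (commGraph {x : G | orderOf x = p}).Connected ↔
      ¬ ∃ U : Subgroup G, IsStronglyPEmbedded p U := by
  obtain ⟨z, hzP, hz, hzc⟩ := P.2.exists_orderOf_eq_forall_commute_s7 hP
  refine ⟨fun hconn ⟨U, hU⟩ => hU.not_connected hconn, fun h => ?_⟩
  rw [connected_iff_componentStabilizer_eq_top P hzP hz]
  by_contra hne
  exact h ⟨_, isStronglyPEmbedded_componentStabilizer P hzP hz hzc hne⟩

def Sylow.supNormalizers (P : Sylow p G) : Subgroup G :=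
  ⨆ Y ∈ {Y : Subgroup G | Y ≠ ⊥ ∧ Y ≤ (P : Subgroup G)}, Subgroup.normalizer (Y : Set G)

namespace Sylow

variable (P : Sylow p G)

theorem normalizer_le_supNormalizers {Y : Subgroup G} (hY : Y ≠ ⊥)
    (hYP : Y ≤ (P : Subgroup G)) :
    Subgroup.normalizer (Y : Set G) ≤ P.supNormalizers :=
  le_biSup (fun Y : Subgroup G => Subgroup.normalizer (Y : Set G))
    (show Y ∈ {Y : Subgroup G | Y ≠ ⊥ ∧ Y ≤ (P : Subgroup G)} from ⟨hY, hYP⟩)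

theorem le_supNormalizers (hP : (P : Subgroup G) ≠ ⊥) : (P : Subgroup G) ≤ P.supNormalizers :=
  Subgroup.le_normalizer.trans (P.normalizer_le_supNormalizers hP le_rfl)

theorem supNormalizers_le_componentStabilizer [Finite G] [Fact p.Prime] {z : G}
    (hzP : z ∈ (P : Subgroup G)) (hz : orderOf z = p) :
    P.supNormalizers ≤ componentStabilizer p z := by
  refine iSup₂_le fun Y ⟨hY, hYP⟩ g hg => ?_
  obtain ⟨y, hyY, hy, -⟩ := (P.2.to_le hYP).exists_orderOf_eq_forall_commute_s7 hY
  have hgyY : MulAut.conj g y ∈ Y := by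
    rw [MulAut.conj_apply]
    exact (Subgroup.mem_normalizer_iff.mp hg y).mp hyY
  have hzy : CommReachable p z y := .of_mem_isPGroup P.2 hzP (hYP hyY) hz hy
  have hzgy : CommReachable p z (MulAut.conj g y) :=
    .of_mem_isPGroup P.2 hzP (hYP hgyY) hz (by rwa [MulEquiv.orderOf_eq])
  exact (mem_componentStabilizer_iff hz).mpr (hzgy.trans (hzy.conj g).symm)

section

variable [Finite G] [Fact p.Prime] {P}

theorem exists_conj_smul_le_maximal_inf_normalizer (hP : (P : Subgroup G) ≠ ⊥) {Q : Subgroup G}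
    (hQ : Q ≠ ⊥) (hQP : ∃ m ∈ P.supNormalizers, MulAut.conj m • Q ≤ P) :
    ∃ m ∈ P.supNormalizers, MulAut.conj m • Q ≤ P ∧ ∀ T : Subgroup G, IsPGroup p T →
      (P : Subgroup G) ⊓ Subgroup.normalizer (↑(MulAut.conj m • Q) : Set G) ≤ T →
      T ≤ Subgroup.normalizer (↑(MulAut.conj m • Q) : Set G) → T ≤ P := by
  obtain ⟨m, ⟨hmM, hmQ⟩, hmax⟩ := Set.exists_max_image
    {m | m ∈ P.supNormalizers ∧ MulAut.conj m • Q ≤ P}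
    (fun m => Nat.card ↥((P : Subgroup G) ⊓
      Subgroup.normalizer (↑(MulAut.conj m • Q) : Set G)))
    (Set.toFinite _) hQP
  refine ⟨m, hmM, hmQ, fun T hT hRT hTN => ?_⟩
  obtain ⟨k, hkM, hkT⟩ := P.exists_mem_conj_smul_le (P.le_supNormalizers hP) hT
    (hTN.trans (P.normalizer_le_supNormalizers (Subgroup.conj_smul_ne_bot m hQ) hmQ))
  have hkmQ : MulAut.conj (k * m) • Q ≤ P := by
    rw [map_mul, mul_smul]
    exact (Subgroup.pointwise_smul_le_pointwise_smul_iff.mpr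
      ((le_inf hmQ Subgroup.le_normalizer).trans hRT)).trans hkT
  have hkTN : MulAut.conj k • T ≤
      (P : Subgroup G) ⊓ Subgroup.normalizer (↑(MulAut.conj (k * m) • Q) : Set G) := by
    rw [map_mul, mul_smul, Subgroup.normalizer_conj_smul]
    exact le_inf hkT (Subgroup.pointwise_smul_le_pointwise_smul_iff.mpr hTN)
  have hcard : Nat.card T ≤ Nat.card ↥((P : Subgroup G) ⊓
      Subgroup.normalizer (↑(MulAut.conj m • Q) : Set G)) :=
    calc Nat.card T = Nat.card ↥(MulAut.conj k • T) := (Subgroup.card_conj_smul k T).symm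
      _ ≤ _ := Subgroup.card_le_of_le hkTN
      _ ≤ _ := hmax (k * m) ⟨mul_mem hkM hmM, hkmQ⟩
  exact Subgroup.eq_of_le_of_card_ge hRT hcard ▸ inf_le_left

theorem exists_conj_smul_le_of_le_normalizer (hP : (P : Subgroup G) ≠ ⊥) {Q S : Subgroup G}
    (hQ : Q ≠ ⊥) (hQP : ∃ m ∈ P.supNormalizers, MulAut.conj m • Q ≤ P)
    (hS : IsPGroup p S) (hSQ : S ≤ Subgroup.normalizer (Q : Set G)) :
    ∃ m ∈ P.supNormalizers, MulAut.conj m • S ≤ P := by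
  obtain ⟨m, hmM, hmQ, hmax⟩ := exists_conj_smul_le_maximal_inf_normalizer hP hQ hQP
  obtain ⟨n, hnN, T, hTN, hT, hRT, hnT⟩ := P.2.to_inf_left.exists_mem_conj_smul_le
    (K := Subgroup.normalizer (↑(MulAut.conj m • Q) : Set G)) inf_le_right (hS.conj_smul m) (by
      rw [Subgroup.normalizer_conj_smul]
      exact Subgroup.pointwise_smul_le_pointwise_smul_iff.mpr hSQ)
  refine ⟨n * m, mul_mem (P.normalizer_le_supNormalizers (Subgroup.conj_smul_ne_bot m hQ) hmQ hnN)
    hmM, ?_⟩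
  rw [map_mul, mul_smul]
  exact hnT.trans (hmax T hT hRT hTN)

theorem supNormalizers_eq_top_of_connected (hP : (P : Subgroup G) ≠ ⊥)
    (hconn : (commGraph {x : G | orderOf x = p}).Connected) : P.supNormalizers = ⊤ := by
  obtain ⟨z, hzP, hz, hzc⟩ := P.2.exists_orderOf_eq_forall_commute_s7 hP
  have hfuse (y : G) (hy : CommReachable p z y) :
      ∃ m ∈ P.supNormalizers, MulAut.conj m • Subgroup.zpowers y ≤ P := by
    refine hy.induction (fun u v hu hv huv hu' => ?_)
      ⟨1, one_mem _, by simpa using Subgroup.zpowers_le.mpr hzP⟩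
    refine exists_conj_smul_le_of_le_normalizer hP (zpowers_ne_bot_of_orderOf_eq_prime Fact.out hu)
      hu' (isPGroup_zpowers_of_orderOf_eq hv)
      (Subgroup.le_normalizer_zpowers_of_forall_commute fun s hs => ?_)
    obtain ⟨k, rfl⟩ := Subgroup.mem_zpowers_iff.mp hs
    exact huv.zpow_right k
  refine (Subgroup.eq_top_iff' _).mpr fun g => ?_
  have hgz : orderOf (MulAut.conj g z) = p := by rwa [MulEquiv.orderOf_eq]
  obtain ⟨m, hmM, hm⟩ := exists_conj_smul_le_of_le_normalizer hP
    (zpowers_ne_bot_of_orderOf_eq_prime Fact.out hgz) (hfuse _ (hconn.commReachable hz hgz))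
    (P.2.conj_smul g) (by
      rw [← Subgroup.conj_smul_zpowers, Subgroup.normalizer_conj_smul]
      exact Subgroup.pointwise_smul_le_pointwise_smul_iff.mpr
        (Subgroup.le_normalizer_zpowers_of_forall_commute hzc))
  have hmg : m * g ∈ Subgroup.normalizer (P : Set G) := by
    refine Sylow.smul_eq_iff_mem_normalizer.mp (Sylow.ext (((m * g) • P).3 P.2 ?_).symm)
    rw [Sylow.coe_subgroup_smul, map_mul, mul_smul]
    exact hm
  exact (Subgroup.mul_mem_cancel_left _ hmM).mp (P.normalizer_le_supNormalizers hP le_rfl hmg)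

theorem supNormalizers_eq_top_iff_connected (hP : (P : Subgroup G) ≠ ⊥) :
    P.supNormalizers = ⊤ ↔ (commGraph {x : G | orderOf x = p}).Connected := by
  obtain ⟨z, hzP, hz, -⟩ := P.2.exists_orderOf_eq_forall_commute_s7 hP
  refine ⟨fun h => (connected_iff_componentStabilizer_eq_top P hzP hz).mpr ?_,
    supNormalizers_eq_top_of_connected hP⟩
  exact top_le_iff.mp (h ▸ P.supNormalizers_le_componentStabilizer hzP hz)

end

end Sylow

end

/-- (Bender) For a finite group `G`, a prime `p` dividing `|G|` and a Sylow `p`-subgroup `P`,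
the following are equivalent: (a) the commuting graph on the elements of order `p` is
connected; (b) `G` has no strongly `p`-embedded subgroup; (c) `G` is generated by the
normalizers of the nontrivial subgroups of `P`. -/
theorem commGraph_connected_iff_no_stronglyPEmbedded
    {G : Type*} [Group G] [Finite G] (p : ℕ) (hp : p.Prime)
    (hdvd : p ∣ Nat.card G) (P : Sylow p G) :
    ((commGraph {x : G | orderOf x = p}).Connected ↔
        ¬ ∃ U : Subgroup G, IsStronglyPEmbedded p U) ∧
    ((¬ ∃ U : Subgroup G, IsStronglyPEmbedded p U) ↔
        (⨆ Y ∈ {Y : Subgroup G | Y ≠ ⊥ ∧ Y ≤ (P : Subgroup G)}, Subgroup.normalizer (Y : Set G)) = ⊤) := by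
  have := Fact.mk hp
  have hP := P.ne_bot_of_dvd_card hdvd
  have hab := connected_iff_not_exists_isStronglyPEmbedded P hP
  exact ⟨hab, hab.symm.trans (P.supNormalizers_eq_top_iff_connected hP).symm⟩
end

section
/- Let G be a finite group and p a prime dividing |G|. If the commuting graph Γ_p on the set of elements of G of order p is connected, then the Sylow p-subgroups of G are non-cyclic or G has a nontrivial normal p-subgroup (O_p(G) ≠ 1). -/
open SimpleGraph

/-!
If one Sylow `p`-subgroup is cyclic, all of them are. Two commuting elements of order `p` then
lie in a common Sylow `p`-subgroup, and a cyclic group has a unique subgroup of order `p`, so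
they generate the same subgroup. Along the paths of the connected commuting graph, every element
of order `p` generates one and the same subgroup `⟨z⟩`, which is therefore normal.
-/

open Subgroup

theorem SimpleGraph.Reachable.eq_of_forall_adj {V β : Type*} {Γ : SimpleGraph V} {f : V → β}
    (hf : ∀ u v, Γ.Adj u v → f u = f v) {u v : V} (h : Γ.Reachable u v) : f u = f v := by
  obtain ⟨w⟩ := h
  induction w with
  | nil => rfl
  | cons hadj _ ih => exact (hf _ _ hadj).trans ih

theorem IsCyclic.coe_zpowers_eq_setOf_pow_orderOf_eq_one {α : Type*} [Group α] [Finite α]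
    [IsCyclic α] (a : α) : (zpowers a : Set α) = {x | x ^ orderOf a = 1} := by
  classical
  have := Fintype.ofFinite α
  have hsub : (zpowers a : Set α) ⊆ {x | x ^ orderOf a = 1} := fun x hx =>
    orderOf_dvd_iff_pow_eq_one.mp (orderOf_dvd_of_mem_zpowers hx)
  refine Set.eq_of_subset_of_ncard_le hsub ?_ (Set.toFinite _)
  calc {x : α | x ^ orderOf a = 1}.ncard
      = (Finset.univ.filter fun x : α => x ^ orderOf a = 1).card := by
        rw [← Set.ncard_coe_finset]; simp
    _ ≤ orderOf a := IsCyclic.card_pow_eq_one_le (orderOf_pos a)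
    _ = (zpowers a : Set α).ncard := by
        rw [← Nat.card_coe_set_eq, SetLike.coe_sort_coe, Nat.card_zpowers]

theorem IsCyclic.zpowers_eq_zpowers_of_orderOf_eq {α : Type*} [Group α] [Finite α] [IsCyclic α]
    {a b : α} (h : orderOf a = orderOf b) : zpowers a = zpowers b :=
  SetLike.coe_injective <| by
    rw [coe_zpowers_eq_setOf_pow_orderOf_eq_one, coe_zpowers_eq_setOf_pow_orderOf_eq_one, h]

theorem Subgroup.zpowers_eq_zpowers_of_orderOf_eq {G : Type*} [Group G] {H : Subgroup G}
    [Finite H] [IsCyclic H] {x y : G} (hx : x ∈ H) (hy : y ∈ H) (h : orderOf x = orderOf y) :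
    zpowers x = zpowers y := by
  have hH : zpowers (⟨x, hx⟩ : H) = zpowers ⟨y, hy⟩ :=
    IsCyclic.zpowers_eq_zpowers_of_orderOf_eq (by simpa using h)
  simpa only [MonoidHom.map_zpowers, coe_subtype] using congrArg (map H.subtype) hH

theorem Commute.exists_sylow_mem {G : Type*} [Group G] {p : ℕ} [Fact p.Prime] {x y : G}
    (hxy : Commute x y) (hx : IsPGroup p (zpowers x)) (hy : IsPGroup p (zpowers y)) :
    ∃ P : Sylow p G, x ∈ P ∧ y ∈ P := by
  have hnorm : zpowers y ≤ normalizer (zpowers x : Set G) :=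
    (zpowers_le.mpr <| mem_centralizer_iff.mpr <| by
      rintro _ ⟨k, rfl⟩; exact (hxy.zpow_left k).eq).trans (centralizer_le_normalizer _)
  obtain ⟨P, hP⟩ := (hx.to_sup_of_normal_left' hy hnorm).exists_le_sylow
  exact ⟨P, hP (mem_sup_left (mem_zpowers x)), hP (mem_sup_right (mem_zpowers y))⟩

theorem zpowers_eq_zpowers_of_commute_of_isCyclic_sylow {G : Type*} [Group G] [Finite G]
    {p n : ℕ} [Fact p.Prime] (hcyc : ∀ P : Sylow p G, IsCyclic P) {x y : G} (hxy : Commute x y)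
    (hx : orderOf x = p ^ n) (hy : orderOf y = p ^ n) : zpowers x = zpowers y := by
  obtain ⟨P, hxP, hyP⟩ := hxy.exists_sylow_mem
    (IsPGroup.of_card (by rw [Nat.card_zpowers, hx]))
    (IsPGroup.of_card (by rw [Nat.card_zpowers, hy]))
  have := hcyc P
  exact zpowers_eq_zpowers_of_orderOf_eq hxP hyP (hx.trans hy.symm)

theorem Subgroup.normal_zpowers_of_forall_orderOf_eq {G : Type*} [Group G] {z : G}
    (h : ∀ x : G, orderOf x = orderOf z → zpowers x = zpowers z) : (zpowers z).Normal := by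
  constructor
  rintro _ ⟨k, rfl⟩ g
  have hconj : g * z * g⁻¹ ∈ zpowers z :=
    h _ (by simpa using (MulAut.conj g).orderOf_eq z) ▸ mem_zpowers _
  simpa [conj_zpow] using zpow_mem hconj k

/-- Let `G` be a finite group and `p` a prime dividing `|G|`. If the commuting graph on the
set of elements of `G` of order `p` is connected, then the Sylow `p`-subgroups of `G` are
non-cyclic, or `G` has a nontrivial normal `p`-subgroup (`O_p(G) ≠ 1`). -/
theorem sylow_not_cyclic_or_pCore_ne_bot_of_commGraph_connected
    {G : Type*} [Group G] [Finite G] (p : ℕ) (hp : p.Prime)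
    (hdvd : p ∣ Nat.card G)
    (hconn : (commGraph {x : G | orderOf x = p}).Connected) :
    (∀ P : Sylow p G, ¬ IsCyclic ↥(P : Subgroup G)) ∨
      ∃ N : Subgroup G, N.Normal ∧ IsPGroup p N ∧ N ≠ ⊥ := by
  have : Fact p.Prime := ⟨hp⟩
  refine or_iff_not_imp_left.mpr fun hnot => ?_
  push Not at hnot
  obtain ⟨P, hP⟩ := hnot
  have hcyc : ∀ Q : Sylow p G, IsCyclic Q := fun Q => (P.equiv Q).isCyclic.mp hP
  obtain ⟨z, hz⟩ := exists_prime_orderOf_dvd_card' p hdvd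
  have hunique : ∀ x : G, orderOf x = orderOf z → zpowers x = zpowers z := fun x hx =>
    (hconn.preconnected ⟨x, hx.trans hz⟩ ⟨z, hz⟩).eq_of_forall_adj
      (f := fun v : {x : G | orderOf x = p} => zpowers (v : G))
      fun u v (huv : (commGraph _).Adj u v) =>
        zpowers_eq_zpowers_of_commute_of_isCyclic_sylow (n := 1) hcyc huv.2
          (by rw [pow_one]; exact u.2) (by rw [pow_one]; exact v.2)
  refine ⟨zpowers z, normal_zpowers_of_forall_orderOf_eq hunique,
    IsPGroup.of_card (n := 1) (by rw [Nat.card_zpowers, hz, pow_one]),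
    zpowers_ne_bot.mpr <| ne_of_apply_ne orderOf <| by rw [hz, orderOf_one]; exact hp.ne_one⟩
end

section
/- Let G be a finite group, X a normal subset of G, and C a big connected component of the commuting graph Γ_X. Then either there exists x ∈ C whose centralizer C_G(x) is non-abelian, or the subgroup ⟨C⟩ generated by C is an abelian normal subgroup of G. -/
open SimpleGraph

/-!
If every vertex `y` of the component `C` has abelian centralizer, then commuting is transitive
through `y`: two neighbours of `y` both lie in `C_G(y)`, so they commute. Walking along a path
from `x`, every vertex of `C` therefore commutes with `x`, and then any two vertices of `C`,
lying in the abelian group `C_G(x)`, commute. So `⟨C⟩` is abelian, and it is normal because `C`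
is invariant under conjugation.
-/

namespace Subgroup

variable {G : Type*} [Group G]

theorem normal_closure_of_conj_mem {s : Set G} (hs : ∀ g : G, ∀ y ∈ s, g * y * g⁻¹ ∈ s) :
    (closure s).Normal := by
  have hconj : Group.conjugatesOfSet s = s := by
    refine subset_antisymm (fun z hz => ?_) Group.subset_conjugatesOfSet
    obtain ⟨y, hy, hyz⟩ := Group.mem_conjugatesOfSet_iff.mp hz
    obtain ⟨g, rfl⟩ := isConj_iff.mp hyz
    exact hs g y hy
  rw [← hconj]
  exact normalClosure_normal

end Subgroup

section CommutingGraph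

variable {G : Type*} [Group G] {X : Set G} {x : G} {hx : x ∈ X}

theorem conj_mem_compSet_of_invariant
    (hbig : ∀ g : G, (fun y => g⁻¹ * y * g) '' compSet X x hx = compSet X x hx)
    (g : G) {y : G} (hy : y ∈ compSet X x hx) : g * y * g⁻¹ ∈ compSet X x hx := by
  rw [← hbig g⁻¹]
  exact ⟨y, hy, by group⟩

theorem mul_comm_of_reachable
    (hC : ∀ y ∈ compSet X x hx,
      ∀ a ∈ Subgroup.centralizer {y}, ∀ b ∈ Subgroup.centralizer {y}, a * b = b * a)
    {v : X} (hv : (commGraph X).Reachable ⟨x, hx⟩ v) :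
    (v : G) * x = x * v := by
  rw [reachable_iff_reflTransGen] at hv
  induction hv with
  | refl => rfl
  | @tail u w hxu huw ih =>
    have hu : (u : G) ∈ compSet X x hx := ⟨u.2, (reachable_iff_reflTransGen _ _).mpr hxu⟩
    exact hC u hu w (Subgroup.mem_centralizer_singleton_iff.mpr huw.2.symm)
      x (Subgroup.mem_centralizer_singleton_iff.mpr ih.symm)

theorem mul_comm_of_mem_compSet
    (hC : ∀ y ∈ compSet X x hx,
      ∀ a ∈ Subgroup.centralizer {y}, ∀ b ∈ Subgroup.centralizer {y}, a * b = b * a)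
    {y z : G} (hy : y ∈ compSet X x hx) (hz : z ∈ compSet X x hx) :
    y * z = z * y := by
  obtain ⟨_, hyr⟩ := hy
  obtain ⟨_, hzr⟩ := hz
  exact hC x mem_compSet_self y
    (Subgroup.mem_centralizer_singleton_iff.mpr (mul_comm_of_reachable hC hyr))
    z (Subgroup.mem_centralizer_singleton_iff.mpr (mul_comm_of_reachable hC hzr))

end CommutingGraph

theorem exists_nonabelian_centralizer_or_closure_abelian_normal_general
    {G : Type*} [Group G] (X : Set G)
    (x : G) (hx : x ∈ X)
    (hbig : ∀ g : G, (fun y => g⁻¹ * y * g) '' compSet X x hx = compSet X x hx) :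
    (∃ y ∈ compSet X x hx,
        ¬ ∀ a ∈ Subgroup.centralizer {y}, ∀ b ∈ Subgroup.centralizer {y}, a * b = b * a) ∨
      ((Subgroup.closure (compSet X x hx)).Normal ∧
        ∀ a ∈ Subgroup.closure (compSet X x hx),
          ∀ b ∈ Subgroup.closure (compSet X x hx), a * b = b * a) := by
  refine or_iff_not_imp_left.mpr fun h => ?_
  push Not at h
  have := Subgroup.isMulCommutative_closure fun y hy z hz => mul_comm_of_mem_compSet h hy hz
  exact ⟨Subgroup.normal_closure_of_conj_mem fun g _ hy =>
      conj_mem_compSet_of_invariant hbig g hy,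
    fun _ ha _ hb => setLike_mul_comm ha hb⟩

/-- Let `X` be a normal subset of a finite group `G` and `C` a big connected component of
the commuting graph on `X` (realized as the component of some `x ∈ X`, invariant under
conjugation). Then either some `y ∈ C` has non-abelian centralizer, or the subgroup
generated by `C` is an abelian normal subgroup of `G`. -/
theorem exists_nonabelian_centralizer_or_closure_abelian_normal
    {G : Type*} [Group G] [Finite G] (X : Set G)
    (hX : ∀ x ∈ X, ∀ g : G, g⁻¹ * x * g ∈ X)
    (x : G) (hx : x ∈ X)
    (hbig : ∀ g : G, (fun y => g⁻¹ * y * g) '' compSet X x hx = compSet X x hx) :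
    (∃ y ∈ compSet X x hx,
        ¬ ∀ a ∈ Subgroup.centralizer {y}, ∀ b ∈ Subgroup.centralizer {y}, a * b = b * a) ∨
      ((Subgroup.closure (compSet X x hx)).Normal ∧
        ∀ a ∈ Subgroup.closure (compSet X x hx),
          ∀ b ∈ Subgroup.closure (compSet X x hx), a * b = b * a) :=
  exists_nonabelian_centralizer_or_closure_abelian_normal_general X x hx hbig
end

section
/- Let p be a prime and n a positive integer. If the value Φ_n(p) of the n-th cyclotomic polynomial at p is a power of 2 (where 1 = 2⁰ counts as a power of 2), then either n = 1 and p is 2 or a Fermat prime, or n = 2 and p is a Mersenne prime. -/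
/-!
Write `Φ_n(p) = 2 ^ k`. For `n = 1` this says `p = 2 ^ k + 1`. For `n > 1` we have
`Φ_n(p) > p - 1 ≥ 1`, so `Φ_n(p)` is even; as `Φ_n(p) ∣ p ^ n - 1`, `p` is odd. Since
`Φ_n(p) ≡ Φ_n(1) (mod p - 1)`, also `Φ_n(1)` is even, which forces `n` to be a power of `2`.
For `n = 2 ^ (a + 2)` we get `Φ_n(p) = (p ^ 2 ^ a) ^ 2 + 1`, never divisible by `4`, so only
`n = 2`, i.e. `p = 2 ^ k - 1`, remains. The classical facts that `2 ^ k + 1` prime forces `k`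
to be a power of `2` and `2 ^ k - 1` prime forces `k` prime finish the proof.
-/

open Polynomial

namespace Polynomial

theorem cyclotomic_two_pow_succ (R : Type*) [CommRing R] (a : ℕ) :
    cyclotomic (2 ^ (a + 1)) R = X ^ 2 ^ a + 1 := by
  simp [cyclotomic_prime_pow_eq_geom_sum Nat.prime_two, Finset.sum_range_succ, add_comm]

theorem isUnit_of_dvd_of_dvd_cyclotomic_eval {R : Type*} [CommRing R] {n : ℕ} (hn : n ≠ 0)
    {d x : R} (hdx : d ∣ x) (h : d ∣ eval x (cyclotomic n R)) : IsUnit d := by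
  have hpow : d ∣ x ^ n - 1 :=
    h.trans (by simpa using eval_dvd (x := x) (cyclotomic.dvd_X_pow_sub_one n R))
  exact isUnit_of_dvd_one (by simpa using dvd_sub (dvd_pow hdx hn) hpow)

theorem exists_eq_pow_of_dvd_cyclotomic_eval {q n : ℕ} (hq : q.Prime) {x : ℤ}
    (hx : (q : ℤ) ∣ x - 1) (h : (q : ℤ) ∣ eval x (cyclotomic n ℤ)) : ∃ a, n = q ^ a := by
  have h1 : (q : ℤ) ∣ eval 1 (cyclotomic n ℤ) :=
    (dvd_sub_right h).1 (hx.trans (sub_dvd_eval_sub x 1 _))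
  by_cases hn : IsPrimePow n
  · obtain ⟨r, b, hr, hb, rfl⟩ := (isPrimePow_nat_iff n).1 hn
    obtain ⟨c, rfl⟩ := Nat.exists_eq_add_of_lt hb
    have : Fact r.Prime := ⟨hr⟩
    rw [zero_add, eval_one_cyclotomic_prime_pow] at h1
    have hqr := (Nat.prime_dvd_prime_iff_eq hq hr).1 (Int.natCast_dvd_natCast.1 h1)
    exact ⟨c + 1, by rw [hqr, zero_add]⟩
  · by_cases hn1 : n = 1
    · exact ⟨0, by rw [hn1, pow_zero]⟩
    have hnp : ∀ {r : ℕ}, r.Prime → ∀ b : ℕ, r ^ b ≠ n := by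
      rintro r hr (_ | b) hrb
      · exact hn1 (by rw [← hrb, pow_zero])
      · exact hn ((isPrimePow_nat_iff n).2 ⟨r, b + 1, hr, b.succ_pos, hrb⟩)
    rw [eval_one_cyclotomic_not_prime_pow hnp] at h1
    exact absurd (Int.natCast_dvd_natCast.1 h1) hq.not_dvd_one

theorem cyclotomic_two_pow_add_two_eval_emod_four {x : ℤ} (hx : Odd x) (a : ℕ) :
    eval x (cyclotomic (2 ^ (a + 2)) ℤ) % 4 = 2 := by
  have hsq := Int.sq_mod_four_eq_one_of_odd (hx.pow (n := 2 ^ a))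
  rw [cyclotomic_two_pow_succ, eval_add, eval_pow, eval_X, eval_one, pow_succ, pow_mul,
    Int.add_emod, hsq]
  rfl

end Polynomial

namespace Nat.Prime

variable {p k : ℕ}

theorem eq_two_or_exists_eq_two_pow_two_pow_add_one (hp : p.Prime) (h : p = 2 ^ k + 1) :
    p = 2 ∨ ∃ m : ℕ, p = 2 ^ 2 ^ m + 1 := by
  rcases Nat.eq_zero_or_pos k with rfl | hk
  · exact .inl h
  · obtain ⟨m, rfl⟩ := Nat.pow_of_pow_add_prime one_lt_two hk.ne' (h ▸ hp)
    exact .inr ⟨m, h⟩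

theorem exists_prime_eq_two_pow_sub_one (hp : p.Prime) (h : p + 1 = 2 ^ k) :
    ∃ m : ℕ, m.Prime ∧ p = 2 ^ m - 1 := by
  have hpk : p = 2 ^ k - 1 := by omega
  have hk : k ≠ 1 := by
    rintro rfl
    exact hp.ne_one (by omega)
  exact ⟨k, (Nat.prime_of_pow_sub_one_prime hk (hpk ▸ hp)).2, hpk⟩

theorem eq_two_of_cyclotomic_eval_eq_two_pow {n : ℕ} (hp : p.Prime) (hn : 1 < n)
    (h : eval (p : ℤ) (cyclotomic n ℤ) = 2 ^ k) : n = 2 := by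
  have hlt : p - 1 < 2 ^ k := by
    simpa [h] using sub_one_lt_natAbs_cyclotomic_eval hn hp.one_lt.ne'
  have hk : k ≠ 0 := by
    rintro rfl
    have := hp.two_le
    omega
  have h2 : (2 : ℤ) ∣ eval (p : ℤ) (cyclotomic n ℤ) := h ▸ dvd_pow_self 2 hk
  have hp2 : p ≠ 2 := by
    rintro rfl
    have := Int.isUnit_iff.1 (isUnit_of_dvd_of_dvd_cyclotomic_eval (n := n) (by omega) dvd_rfl h2)
    omega
  have hodd : Odd (p : ℤ) := (Int.odd_coe_nat p).2 (hp.odd_of_ne_two hp2)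
  obtain ⟨a, rfl⟩ := exists_eq_pow_of_dvd_cyclotomic_eval Nat.prime_two
    (hodd.sub_odd odd_one).two_dvd h2
  rcases a with _ | _ | a
  · exact absurd hn (lt_irrefl 1)
  · rfl
  · have hk2 : 2 ≤ k := by
      have := hp.two_le
      exact (Nat.pow_lt_pow_iff_right one_lt_two).1 (by omega : 2 ^ 1 < 2 ^ k)
    have h4 := h ▸ cyclotomic_two_pow_add_two_eval_emod_four hodd a
    have h4' := Int.emod_eq_zero_of_dvd (pow_dvd_pow (2 : ℤ) hk2)
    norm_num at h4'
    omega

end Nat.Prime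

/-- If `p` is a prime, `n ≥ 1`, and the value `Φ_n(p)` of the `n`-th cyclotomic polynomial
at `p` is a power of 2, then either `n = 1` and `p` is 2 or a Fermat prime, or `n = 2` and
`p` is a Mersenne prime. -/
theorem cyclotomic_eval_prime_two_pow
    (p n : ℕ) (hp : p.Prime) (hn : 0 < n)
    (h : ∃ k : ℕ, (Polynomial.cyclotomic n ℤ).eval (p : ℤ) = 2 ^ k) :
    (n = 1 ∧ (p = 2 ∨ ∃ m : ℕ, p = 2 ^ 2 ^ m + 1)) ∨
      (n = 2 ∧ ∃ m : ℕ, m.Prime ∧ p = 2 ^ m - 1) := by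
  obtain ⟨k, hk⟩ := h
  obtain rfl | hn1 := (show 1 ≤ n from hn).eq_or_lt
  · have hpk : (p : ℤ) = 2 ^ k + 1 := by
      simp only [cyclotomic_one, eval_sub, eval_X, eval_one] at hk
      linarith
    exact .inl ⟨rfl, hp.eq_two_or_exists_eq_two_pow_two_pow_add_one (by exact_mod_cast hpk)⟩
  · obtain rfl := hp.eq_two_of_cyclotomic_eval_eq_two_pow hn1 hk
    have hpk : (p : ℤ) + 1 = 2 ^ k := by
      simpa only [cyclotomic_two, eval_add, eval_X, eval_one] using hk
    exact .inr ⟨rfl, hp.exists_prime_eq_two_pow_sub_one (by exact_mod_cast hpk)⟩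
end

section
/- Let p be a prime and n a positive integer. If the value Φ_n(p) of the n-th cyclotomic polynomial at p is a power of 3 (where 1 = 3⁰ counts as a power of 3), then p = 2 and n ∈ {1, 2, 6}. -/
/-!
For `n ≤ 2` the value `Φ_n(p) = p ∓ 1` is odd, so `p = 2`. For `n ≥ 3` the value exceeds `1`, so
`3` divides it; then `p mod 3` is a primitive root of unity whose order is the `3`-free part `m` of
`n`, so `m ∣ 2` and hence `3 ∣ n`. Writing `n = 3q`, `Φ_n(p)` divides `y² + y + 1` with `y = p^q`,
which is never divisible by `9`; so `Φ_n(p) = 3`. The bound `(p - 1)^φ(n) < Φ_n(p)` then forces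
`p = 2`. Finally `2 ≡ -1` has order `2` mod `3`, so `m = 2`, and `n = 2·3^e` with `e ≥ 2` is
impossible because then `Φ_n(2) = Φ_{n/3}(8) > 7`.
-/

open Polynomial

theorem isPrimitiveRoot_ordCompl_of_dvd_cyclotomic_eval {ℓ n : ℕ} [Fact ℓ.Prime] (hn : n ≠ 0)
    {a : ℤ} (h : (ℓ : ℤ) ∣ (cyclotomic n ℤ).eval a) :
    IsPrimitiveRoot (a : ZMod ℓ) (ordCompl[ℓ] n) := by
  have : NeZero ((ordCompl[ℓ] n : ℕ) : ZMod ℓ) :=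
    ⟨by simpa [ZMod.natCast_eq_zero_iff] using Nat.not_dvd_ordCompl Fact.out hn⟩
  have hroot : (cyclotomic n (ZMod ℓ)).IsRoot (a : ZMod ℓ) := by
    rw [IsRoot, ← map_cyclotomic_int, eval_intCast_map, eq_intCast,
      ZMod.intCast_zmod_eq_zero_iff_dvd]
    exact h
  rw [← Nat.ordProj_mul_ordCompl_eq_self n ℓ] at hroot
  exact isRoot_cyclotomic_prime_pow_mul_iff_of_charP.mp hroot

theorem ordCompl_dvd_sub_one_of_dvd_cyclotomic_eval {ℓ n : ℕ} [Fact ℓ.Prime] (hn : n ≠ 0)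
    {a : ℤ} (h : (ℓ : ℤ) ∣ (cyclotomic n ℤ).eval a) : ordCompl[ℓ] n ∣ ℓ - 1 := by
  have hprim := isPrimitiveRoot_ordCompl_of_dvd_cyclotomic_eval hn h
  have ha : (a : ZMod ℓ) ≠ 0 := fun h0 ↦ by
    simpa [h0, zero_pow (Nat.ordCompl_pos ℓ hn).ne'] using hprim.pow_eq_one
  exact hprim.dvd_of_pow_eq_one _ (ZMod.pow_card_sub_one_eq_one ha)

theorem cyclotomic_eval_dvd_sq_add_self_add_one {R : Type*} [CommRing R] [IsDomain R] {q : ℕ}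
    (hq : q ≠ 0) {a : R} (ha : a ^ q ≠ 1) :
    (cyclotomic (3 * q) R).eval a ∣ (a ^ q) ^ 2 + a ^ q + 1 := by
  have hdvd := eval_dvd (x := a) <| X_pow_sub_one_mul_cyclotomic_dvd_X_pow_sub_one_of_dvd R
    (Nat.mem_properDivisors.mpr ⟨dvd_mul_left q 3, by omega⟩)
  simp only [eval_mul, eval_sub, eval_pow, eval_X, eval_one] at hdvd
  rw [show a ^ (3 * q) - 1 = (a ^ q - 1) * ((a ^ q) ^ 2 + a ^ q + 1) by ring] at hdvd
  exact (mul_dvd_mul_iff_left (sub_ne_zero.mpr ha)).mp hdvd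

theorem not_nine_dvd_sq_add_self_add_one (y : ℤ) : ¬ 9 ∣ y ^ 2 + y + 1 := by
  have key : ∀ z : ZMod 9, z ^ 2 + z + 1 ≠ 0 := by decide
  intro h
  apply key y
  exact_mod_cast (ZMod.intCast_zmod_eq_zero_iff_dvd _ 9).mpr h

theorem cyclotomic_mul_prime_eval_of_dvd {R : Type*} [CommRing R] {ℓ q : ℕ} (hℓ : ℓ.Prime)
    (h : ℓ ∣ q) (a : R) : (cyclotomic (q * ℓ) R).eval a = (cyclotomic q R).eval (a ^ ℓ) := by
  rw [← expand_eval, cyclotomic_expand_eq_cyclotomic hℓ h]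

theorem isPrimitiveRoot_two_zmod_three : IsPrimitiveRoot (2 : ZMod 3) 2 :=
  IsPrimitiveRoot.neg_one 3 (by norm_num)

theorem cyclotomic_eval_eq_three_of_eq_three_pow {n p k : ℕ} (hn : 3 ≤ n) (hp : 2 ≤ p)
    (hk : (cyclotomic n ℤ).eval (p : ℤ) = 3 ^ k) : (cyclotomic n ℤ).eval (p : ℤ) = 3 := by
  have hk0 : k ≠ 0 := by
    rintro rfl
    have := sub_one_lt_natAbs_cyclotomic_eval (n := n) (q := p) (by omega) (by omega)
    rw [hk, pow_zero, Int.natAbs_one] at this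
    omega
  have h3 : ((3 : ℕ) : ℤ) ∣ (cyclotomic n ℤ).eval (p : ℤ) := hk ▸ dvd_pow_self 3 hk0
  have : Fact (Nat.Prime 3) := ⟨Nat.prime_three⟩
  have hm := ordCompl_dvd_sub_one_of_dvd_cyclotomic_eval (by omega) h3
  obtain ⟨q, rfl⟩ : 3 ∣ n := by
    by_contra h
    rw [Nat.factorization_eq_zero_of_not_dvd h, pow_zero, Nat.div_one] at hm
    have := Nat.le_of_dvd two_pos hm
    omega
  have hpq : (p : ℤ) ^ q ≠ 1 := (one_lt_pow₀ (by omega) (by omega)).ne'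
  have hdvd := cyclotomic_eval_dvd_sq_add_self_add_one (by omega) hpq
  have hk1 : k = 1 := by
    by_contra hk1
    refine not_nine_dvd_sq_add_self_add_one _ (dvd_trans ?_ hdvd)
    exact hk ▸ pow_dvd_pow 3 (show 2 ≤ k by omega)
  rw [hk, hk1, pow_one]

theorem eq_two_of_cyclotomic_eval_eq_three {n p : ℕ} (hn : 3 ≤ n) (hp : 2 ≤ p)
    (h : (cyclotomic n ℤ).eval (p : ℤ) = 3) : p = 2 := by
  have hφ : 2 ≤ n.totient := by
    have := Nat.totient_pos.mpr (show 0 < n by omega)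
    have : n.totient ≠ 1 := fun h1 ↦ by
      rcases Nat.totient_eq_one_iff.mp h1 with rfl | rfl <;> omega
    omega
  have hlt := sub_one_pow_totient_lt_natAbs_cyclotomic_eval (n := n) (q := p) (by omega) (by omega)
  simp only [h, Int.reduceAbs] at hlt
  by_contra hp2
  have : 2 ^ 2 ≤ (p - 1) ^ n.totient :=
    (Nat.pow_le_pow_left (by omega) 2).trans (Nat.pow_le_pow_right (by omega) hφ)
  omega

theorem eq_six_of_cyclotomic_eval_two_eq_three {n : ℕ} (hn : 3 ≤ n)
    (h : (cyclotomic n ℤ).eval 2 = 3) : n = 6 := by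
  have : Fact (Nat.Prime 3) := ⟨Nat.prime_three⟩
  have hprim := isPrimitiveRoot_ordCompl_of_dvd_cyclotomic_eval (ℓ := 3) (n := n) (a := 2)
    (by omega) (by rw [h]; rfl)
  have hm : ordCompl[3] n = 2 := hprim.unique (by exact_mod_cast isPrimitiveRoot_two_zmod_three)
  have hn' := Nat.ordProj_mul_ordCompl_eq_self n 3
  rw [hm] at hn'
  rcases hfac : n.factorization 3 with _ | _ | e <;> rw [hfac] at hn'
  · omega
  · omega
  · have hq : 3 ∣ 3 ^ (e + 1) * 2 := dvd_mul_of_dvd_left (dvd_pow_self 3 (by omega)) 2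
    have hlt := sub_one_lt_natAbs_cyclotomic_eval (n := 3 ^ (e + 1) * 2) (q := 8)
      (by omega) (by omega)
    push_cast at hlt
    rw [show (8 : ℤ) = 2 ^ 3 by norm_num, ← cyclotomic_mul_prime_eval_of_dvd Nat.prime_three hq,
      show 3 ^ (e + 1) * 2 * 3 = n by rw [← hn']; ring, h] at hlt
    simp at hlt

/-- If `p` is a prime, `n ≥ 1`, and the value `Φ_n(p)` of the `n`-th cyclotomic polynomial
at `p` is a power of 3, then `p = 2` and `n ∈ {1, 2, 6}`. -/
theorem cyclotomic_eval_prime_three_pow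
    (p n : ℕ) (hp : p.Prime) (hn : 0 < n)
    (h : ∃ k : ℕ, (Polynomial.cyclotomic n ℤ).eval (p : ℤ) = 3 ^ k) :
    p = 2 ∧ n ∈ ({1, 2, 6} : Set ℕ) := by
  obtain ⟨k, hk⟩ := h
  have hodd : Odd ((cyclotomic n ℤ).eval (p : ℤ)) := hk ▸ Odd.pow (by decide)
  obtain rfl | rfl | hn3 : n = 1 ∨ n = 2 ∨ 3 ≤ n := by omega
  · refine ⟨hp.even_iff.mp ?_, by simp⟩
    simpa [parity_simps] using hodd
  · refine ⟨hp.even_iff.mp ?_, by simp⟩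
    simpa [parity_simps] using hodd
  · have h3 := cyclotomic_eval_eq_three_of_eq_three_pow hn3 hp.two_le hk
    obtain rfl := eq_two_of_cyclotomic_eval_eq_three hn3 hp.two_le h3
    exact ⟨rfl, by simp [eq_six_of_cyclotomic_eval_two_eq_three hn3 (by exact_mod_cast h3)]⟩
end

section
/- Let p be a prime and n a positive integer. If the value Φ_n(p) of the n-th cyclotomic polynomial at p equals 3^a · 5^b for some nonnegative integers a and b, then p = 2 and n ∈ {1, 2, 4, 6}. -/
open Polynomial

/-- If a prime `q` divides `Φ_n(x)` then `x mod q` is a primitive root of order the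
`q`-free part of `n`. -/
lemma primroot_of_dvd_cyclotomic_eval {q n : ℕ} {x : ℤ} (hq : q.Prime) (hn : 0 < n)
    (hd : (q : ℤ) ∣ (cyclotomic n ℤ).eval x) :
    IsPrimitiveRoot ((x : ZMod q)) (ordCompl[q] n) := by
  haveI : Fact q.Prime := ⟨hq⟩
  set m := ordCompl[q] n with hm
  have hqm : ¬ q ∣ m := Nat.not_dvd_ordCompl hq hn.ne'
  haveI : NeZero ((m : ZMod q)) :=
    ⟨by rw [Ne, ZMod.natCast_eq_zero_iff]; exact hqm⟩
  have hroot : (cyclotomic n (ZMod q)).IsRoot ((x : ZMod q)) := by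
    have h1 : (cyclotomic n (ZMod q)).eval ((x : ZMod q)) =
        (((cyclotomic n ℤ).eval x : ℤ) : ZMod q) := by
      have := cyclotomic.eval_apply x n (Int.castRingHom (ZMod q))
      simpa using this
    have h2 : (((cyclotomic n ℤ).eval x : ℤ) : ZMod q) = 0 := by
      rwa [ZMod.intCast_zmod_eq_zero_iff_dvd]
    exact h1.trans h2
  have hself := Nat.ordProj_mul_ordCompl_eq_self n q
  rw [← hself] at hroot
  exact (isRoot_cyclotomic_prime_pow_mul_iff_of_charP).mp hroot

lemma ordCompl_dvd_sub_one_of_dvd_cyclotomic_eval_s15 {q n : ℕ} {x : ℤ} (hq : q.Prime) (hn : 0 < n)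
    (hd : (q : ℤ) ∣ (cyclotomic n ℤ).eval x) :
    ordCompl[q] n ∣ q - 1 ∧ ¬ (q : ℤ) ∣ x := by
  haveI : Fact q.Prime := ⟨hq⟩
  have h := primroot_of_dvd_cyclotomic_eval hq hn hd
  have hm : 0 < ordCompl[q] n := Nat.ordCompl_pos q hn.ne'
  have hx0 : (x : ZMod q) ≠ 0 := by
    intro h0
    have h1 := h.pow_eq_one
    rw [h0, zero_pow hm.ne'] at h1
    exact zero_ne_one h1
  constructor
  · have horder : ordCompl[q] n = orderOf ((x : ZMod q)) := h.eq_orderOf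
    rw [horder]
    exact orderOf_dvd_of_pow_eq_one (ZMod.pow_card_sub_one_eq_one hx0)
  · rwa [Ne, ZMod.intCast_zmod_eq_zero_iff_dvd] at hx0

/-- `(x^t - 1) * Φ_n(x) ∣ x^n - 1` when `t` is a proper divisor of `n`. -/
lemma sub_one_mul_cyclotomic_eval_dvd {n t : ℕ} (x : ℤ) (ht : 0 < t) (htn : t ∣ n) (hlt : t < n) :
    (x ^ t - 1) * (cyclotomic n ℤ).eval x ∣ x ^ n - 1 := by
  have hn' : 0 < n := lt_of_le_of_lt (Nat.zero_le t) hlt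
  have hnmem : n ∉ t.divisors := by
    intro hmem
    exact absurd (Nat.le_of_dvd ht (Nat.mem_divisors.mp hmem).1) (not_le.mpr hlt)
  have hsub : insert n t.divisors ⊆ n.divisors := by
    intro d hd
    rcases Finset.mem_insert.mp hd with h | hd
    · subst h; exact Nat.mem_divisors_self d hn'.ne'
    · exact Nat.mem_divisors.mpr ⟨(Nat.mem_divisors.mp hd).1.trans htn, hn'.ne'⟩
  have hdvd : ∏ d ∈ insert n t.divisors, (cyclotomic d ℤ).eval x ∣
      ∏ d ∈ n.divisors, (cyclotomic d ℤ).eval x :=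
    Finset.prod_dvd_prod_of_subset _ _ _ hsub
  rw [Finset.prod_insert hnmem] at hdvd
  have ht' : ∏ d ∈ t.divisors, (cyclotomic d ℤ).eval x = x ^ t - 1 := by
    rw [← eval_prod, prod_cyclotomic_eq_X_pow_sub_one ht]
    simp
  have hn'' : ∏ d ∈ n.divisors, (cyclotomic d ℤ).eval x = x ^ n - 1 := by
    rw [← eval_prod, prod_cyclotomic_eq_X_pow_sub_one hn']
    simp
  rw [ht', hn''] at hdvd
  calc (x ^ t - 1) * (cyclotomic n ℤ).eval x
      = (cyclotomic n ℤ).eval x * (x ^ t - 1) := by ring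
    _ ∣ x ^ n - 1 := hdvd

/-- Casting the integer evaluation to the reals. -/
lemma cyclotomic_eval_int_cast_real (m : ℕ) (y : ℤ) :
    (((cyclotomic m ℤ).eval y : ℤ) : ℝ) = (cyclotomic m ℝ).eval ((y : ℤ) : ℝ) := by
  have := cyclotomic.eval_apply y m (Int.castRingHom ℝ)
  simpa using this.symm

/-- The real lower bound, in integer form. -/
lemma sub_one_pow_totient_lt_cyclotomic_eval_int {m : ℕ} (hm : 2 ≤ m) {y : ℤ} (hy : 2 ≤ y) :
    (y - 1) ^ m.totient < (cyclotomic m ℤ).eval y := by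
  have hb := sub_one_pow_totient_lt_cyclotomic_eval (q := (y : ℝ)) hm
    (by exact_mod_cast (by omega : (1:ℤ) < y))
  have hcast := cyclotomic_eval_int_cast_real m y
  have : (((y - 1 : ℤ) : ℝ)) ^ m.totient < (((cyclotomic m ℤ).eval y : ℤ) : ℝ) := by
    rw [hcast]; push_cast; convert hb using 2
  exact_mod_cast this

lemma sub_one_lt_cyclotomic_eval_int {m : ℕ} (hm : 2 ≤ m) {y : ℤ} (hy : 2 ≤ y) :
    y - 1 < (cyclotomic m ℤ).eval y := by
  have hb := sub_one_pow_totient_lt_cyclotomic_eval (q := (y : ℝ)) hm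
    (by exact_mod_cast (by omega : (1:ℤ) < y))
  have h1 : ((y : ℝ) - 1) ≤ ((y : ℝ) - 1) ^ m.totient := by
    apply le_self_pow₀
    · have : (1:ℝ) ≤ (y:ℝ) - 1 := by
        have : (2:ℝ) ≤ (y:ℝ) := by exact_mod_cast hy
        linarith
      exact this
    · exact (Nat.totient_pos.mpr (by omega)).ne'
  have hcast := cyclotomic_eval_int_cast_real m y
  have : ((y : ℝ) - 1) < (((cyclotomic m ℤ).eval y : ℤ) : ℝ) := by
    rw [hcast]; linarith
  exact_mod_cast this

lemma not_nine_dvd_cyclotomic_eval {n : ℕ} {x : ℤ} (hx : 2 ≤ x) (h3 : 3 ∣ n) (hn : 0 < n)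
    (hy : (3:ℤ) ∣ x ^ (n / 3) - 1) : ¬ (9 : ℤ) ∣ (cyclotomic n ℤ).eval x := by
  set t := n / 3 with htdef
  have hn3 : n = 3 * t := (Nat.mul_div_cancel' h3).symm
  have ht : 0 < t := by omega
  have hlt : t < n := by omega
  have hdvd := sub_one_mul_cyclotomic_eval_dvd x ht ⟨3, by omega⟩ hlt
  have hxn : x ^ n - 1 = (x ^ t - 1) * ((x ^ t) ^ 2 + x ^ t + 1) := by
    rw [hn3, mul_comm 3 t, pow_mul]; ring
  have hyne : x ^ t - 1 ≠ 0 := by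
    have : (1:ℤ) < x ^ t := one_lt_pow₀ (by omega) ht.ne'
    omega
  have hv : (cyclotomic n ℤ).eval x ∣ (x ^ t) ^ 2 + x ^ t + 1 := by
    rw [hxn] at hdvd
    exact (mul_dvd_mul_iff_left hyne).mp hdvd
  intro h9
  obtain ⟨c, hc⟩ := hy
  have h9' : (9:ℤ) ∣ (x ^ t) ^ 2 + x ^ t + 1 := h9.trans hv
  have hval : (x ^ t) ^ 2 + x ^ t + 1 = 3 + 9 * (c + c ^ 2) := by
    have hxt : x ^ t = 1 + 3 * c := by omega
    rw [hxt]; ring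
  rw [hval] at h9'
  obtain ⟨d, hd⟩ := h9'
  omega

lemma not_twentyfive_dvd_cyclotomic_eval {n : ℕ} {x : ℤ} (hx : 2 ≤ x) (h5 : 5 ∣ n) (hn : 0 < n)
    (hy : (5:ℤ) ∣ x ^ (n / 5) - 1) : ¬ (25 : ℤ) ∣ (cyclotomic n ℤ).eval x := by
  set t := n / 5 with htdef
  have hn5 : n = 5 * t := (Nat.mul_div_cancel' h5).symm
  have ht : 0 < t := by omega
  have hlt : t < n := by omega
  have hdvd := sub_one_mul_cyclotomic_eval_dvd x ht ⟨5, by omega⟩ hlt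
  have hxn : x ^ n - 1 =
      (x ^ t - 1) * ((x ^ t) ^ 4 + (x ^ t) ^ 3 + (x ^ t) ^ 2 + x ^ t + 1) := by
    rw [hn5, mul_comm 5 t, pow_mul]; ring
  have hyne : x ^ t - 1 ≠ 0 := by
    have : (1:ℤ) < x ^ t := one_lt_pow₀ (by omega) ht.ne'
    omega
  have hv : (cyclotomic n ℤ).eval x ∣ (x ^ t) ^ 4 + (x ^ t) ^ 3 + (x ^ t) ^ 2 + x ^ t + 1 := by
    rw [hxn] at hdvd
    exact (mul_dvd_mul_iff_left hyne).mp hdvd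
  intro h25
  obtain ⟨c, hc⟩ := hy
  have h25' : (25:ℤ) ∣ (x ^ t) ^ 4 + (x ^ t) ^ 3 + (x ^ t) ^ 2 + x ^ t + 1 := h25.trans hv
  have hval : (x ^ t) ^ 4 + (x ^ t) ^ 3 + (x ^ t) ^ 2 + x ^ t + 1 =
      5 + 25 * (2 * c + 10 * c ^ 2 + 25 * c ^ 3 + 25 * c ^ 4) := by
    have hxt : x ^ t = 1 + 5 * c := by omega
    rw [hxt]; ring
  rw [hval] at h25'
  obtain ⟨d, hd⟩ := h25'
  omega

lemma eval_two_cyclotomic_one : (cyclotomic 1 ℤ).eval 2 = 1 := by simp [cyclotomic_one]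
lemma eval_two_cyclotomic_two : (cyclotomic 2 ℤ).eval 2 = 3 := by simp [cyclotomic_two]
lemma eval_two_cyclotomic_three : (cyclotomic 3 ℤ).eval 2 = 7 := by
  haveI : Fact (Nat.Prime 3) := ⟨by norm_num⟩
  rw [cyclotomic_prime]; simp [Finset.sum_range_succ]
lemma eval_two_cyclotomic_five : (cyclotomic 5 ℤ).eval 2 = 31 := by
  haveI : Fact (Nat.Prime 5) := ⟨by norm_num⟩
  rw [cyclotomic_prime]; simp [Finset.sum_range_succ]
lemma eval_two_cyclotomic_four : (cyclotomic 4 ℤ).eval 2 = 5 := by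
  have h := cyclotomic_expand_eq_cyclotomic Nat.prime_two (dvd_refl 2) ℤ
  rw [(by norm_num : (4:ℕ) = 2 * 2), ← h, expand_eval, cyclotomic_two]
  norm_num

lemma eval_two_cyclotomic_ten : (cyclotomic 10 ℤ).eval 2 = 11 := by
  have hp := prod_cyclotomic_eq_X_pow_sub_one (by norm_num : 0 < 10) ℤ
  have he := congrArg (eval (2:ℤ)) hp
  rw [eval_prod] at he
  rw [(by decide : Nat.divisors 10 = {1, 2, 5, 10})] at he
  rw [show ({1, 2, 5, 10} : Finset ℕ) = insert 1 (insert 2 (insert 5 ({10} : Finset ℕ))) from rfl]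
    at he
  rw [Finset.prod_insert (by decide), Finset.prod_insert (by decide),
    Finset.prod_insert (by decide), Finset.prod_singleton] at he
  rw [eval_two_cyclotomic_one, eval_two_cyclotomic_two, eval_two_cyclotomic_five] at he
  simp at he
  omega

lemma eval_two_cyclotomic_twenty : (cyclotomic 20 ℤ).eval 2 = 205 := by
  have hp := prod_cyclotomic_eq_X_pow_sub_one (by norm_num : 0 < 20) ℤ
  have he := congrArg (eval (2:ℤ)) hp
  rw [eval_prod] at he
  rw [(by decide : Nat.divisors 20 = {1, 2, 4, 5, 10, 20})] at he
  rw [show ({1, 2, 4, 5, 10, 20} : Finset ℕ) =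
    insert 1 (insert 2 (insert 4 (insert 5 (insert 10 ({20} : Finset ℕ))))) from rfl] at he
  rw [Finset.prod_insert (by decide), Finset.prod_insert (by decide),
    Finset.prod_insert (by decide), Finset.prod_insert (by decide),
    Finset.prod_insert (by decide), Finset.prod_singleton] at he
  rw [eval_two_cyclotomic_one, eval_two_cyclotomic_two, eval_two_cyclotomic_four,
    eval_two_cyclotomic_five, eval_two_cyclotomic_ten] at he
  simp at he
  omega

/-- If `p` is a prime, `n ≥ 1`, and the value `Φ_n(p)` of the `n`-th cyclotomic polynomial
at `p` equals `3^a * 5^b` for some nonnegative integers `a, b`, then `p = 2` and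
`n ∈ {1, 2, 4, 6}`. -/
theorem cyclotomic_eval_prime_three_pow_mul_five_pow
    (p n : ℕ) (hp : p.Prime) (hn : 0 < n)
    (h : ∃ a b : ℕ, (Polynomial.cyclotomic n ℤ).eval (p : ℤ) = 3 ^ a * 5 ^ b) :
    p = 2 ∧ n ∈ ({1, 2, 4, 6} : Set ℕ) := by
  obtain ⟨a, b, h⟩ := h
  have hp2 : 2 ≤ p := hp.two_le
  have hx2 : (2:ℤ) ≤ (p:ℤ) := by exact_mod_cast hp2
  have hoddR : Odd ((3:ℤ) ^ a * 5 ^ b) :=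
    Odd.mul (Odd.pow ⟨1, by ring⟩) (Odd.pow ⟨2, by ring⟩)
  by_cases h3n : 3 ∣ n
  · -- Case II : 3 ∣ n
    have hn3le : 3 ≤ n := Nat.le_of_dvd hn h3n
    have hb : b = 0 := by
      by_contra hb0
      have h5dvd : (5:ℤ) ∣ (cyclotomic n ℤ).eval (p:ℤ) := by
        rw [h]; exact Dvd.dvd.mul_left (dvd_pow_self 5 hb0) _
      have hm5 := (ordCompl_dvd_sub_one_of_dvd_cyclotomic_eval_s15 (q := 5) (by norm_num) hn h5dvd).1
      have h3m : 3 ∣ ordCompl[5] n := by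
        have hself := Nat.ordProj_mul_ordCompl_eq_self n 5
        have hcop : Nat.Coprime 3 (5 ^ n.factorization 5) :=
          Nat.Coprime.pow_right _ (by norm_num)
        exact hcop.dvd_of_dvd_mul_left (by rw [hself]; exact h3n)
      have h34 : (3:ℕ) ∣ 4 := h3m.trans (by norm_num at hm5 ⊢; exact hm5)
      norm_num at h34
    subst hb
    rw [pow_zero, mul_one] at h
    have ha : 0 < a := by
      rcases Nat.eq_zero_or_pos a with rfl | ha
      · exfalso
        rw [pow_zero] at h
        have hg := sub_one_lt_cyclotomic_eval_int (m := n) (by omega) hx2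
        rw [h] at hg; omega
      · exact ha
    have h3dvd : (3:ℤ) ∣ (cyclotomic n ℤ).eval (p:ℤ) := by
      rw [h]; exact dvd_pow_self 3 ha.ne'
    obtain ⟨hm3, hp3⟩ := ordCompl_dvd_sub_one_of_dvd_cyclotomic_eval_s15 (q := 3) (by norm_num) hn h3dvd
    have hproot := primroot_of_dvd_cyclotomic_eval (q := 3) (by norm_num) hn h3dvd
    set k := n.factorization 3 with hk
    have hk1 : 1 ≤ k := Nat.Prime.factorization_pos_of_dvd (by norm_num) hn.ne' h3n
    set m := ordCompl[3] n with hmdef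
    have hself : 3 ^ k * m = n := Nat.ordProj_mul_ordCompl_eq_self n 3
    have hmpos : 0 < m := Nat.ordCompl_pos 3 hn.ne'
    clear_value k m
    have hpow3 : (3:ℕ) ^ k = 3 * 3 ^ (k - 1) := by
      rw [← pow_succ']; congr 1; omega
    have hnt : n = 3 * (3 ^ (k-1) * m) := by
      rw [← hself, hpow3]; ring
    have ht3 : n / 3 = 3 ^ (k-1) * m := by
      conv_lhs => rw [hnt]
      exact Nat.mul_div_cancel_left _ (by norm_num)
    have hmdvd : m ∣ n / 3 := by rw [ht3]; exact Dvd.intro_left _ rfl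
    have hy3 : (3:ℤ) ∣ (p:ℤ) ^ (n/3) - 1 := by
      obtain ⟨s, hs⟩ := hmdvd
      have hpow : (((p:ℤ) : ZMod 3)) ^ (n/3) = 1 := by
        rw [hs, pow_mul, hproot.pow_eq_one, one_pow]
      have hcast : (((p:ℤ) ^ (n/3) - 1 : ℤ) : ZMod 3) = 0 := by
        push_cast at hpow ⊢
        rw [hpow]; ring
      exact_mod_cast (ZMod.intCast_zmod_eq_zero_iff_dvd _ 3).mp hcast
    have h9 := not_nine_dvd_cyclotomic_eval hx2 h3n hn hy3
    have ha1 : a = 1 := by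
      by_contra ha2
      have h9d : (9:ℤ) ∣ 3 ^ a := by
        calc (9:ℤ) = 3 ^ 2 := by norm_num
          _ ∣ 3 ^ a := pow_dvd_pow 3 (by omega)
      exact h9 (by rw [h]; exact h9d)
    rw [ha1, pow_one] at h
    rcases Nat.lt_or_ge k 2 with hklt | hk2
    · -- k = 1, n ∈ {3, 6}
      have hkeq : k = 1 := by omega
      have hm2 : m ∣ 2 := by norm_num at hm3; exact hm3
      have hm12 : m = 1 ∨ m = 2 := (Nat.dvd_prime Nat.prime_two).mp hm2
      have hself' : 3 * m = n := by rw [hkeq, pow_one] at hself; exact hself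
      have hn36 : n = 3 ∨ n = 6 := by omega
      have hplt := sub_one_lt_cyclotomic_eval_int (m := n) (by omega) hx2
      rw [h] at hplt
      have hple : p ≤ 3 := by
        have : (p:ℤ) ≤ 3 := by omega
        exact_mod_cast this
      have hpne3 : p ≠ 3 := by
        intro hp3'
        apply hp3
        rw [hp3']
      have hp2' : p = 2 := by omega
      subst hp2'
      push_cast at h
      rcases hn36 with rfl | rfl
      · rw [eval_two_cyclotomic_three] at h; norm_num at h
      · exact ⟨rfl, by simp⟩
    · -- k ≥ 2 : size contradiction
      exfalso
      have h3t : 3 ∣ n / 3 := by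
        rw [ht3]; exact Dvd.dvd.mul_right (dvd_pow_self 3 (by omega)) m
      have ht2 : 2 ≤ n / 3 := by
        have := Nat.le_of_dvd (by omega) h3t
        omega
      have hexp := cyclotomic_expand_eq_cyclotomic Nat.prime_three h3t ℤ
      have hneq : n / 3 * 3 = n := Nat.div_mul_cancel h3n
      have heval : (cyclotomic n ℤ).eval (p:ℤ) = (cyclotomic (n/3) ℤ).eval ((p:ℤ)^3) := by
        conv_lhs => rw [← hneq]
        rw [← hexp, expand_eval]
      have h8 : (8:ℤ) ≤ (p:ℤ)^3 := by
        calc (8:ℤ) = 2^3 := by norm_num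
          _ ≤ (p:ℤ)^3 := pow_le_pow_left₀ (by norm_num) hx2 3
      have hy2 : (2:ℤ) ≤ (p:ℤ)^3 := by linarith
      have hbig := sub_one_lt_cyclotomic_eval_int (m := n/3) ht2 hy2
      rw [← heval, h] at hbig
      linarith
  · by_cases h5n : 5 ∣ n
    · -- Case III : 5 ∣ n, ¬ 3 ∣ n
      have hn5le : 5 ≤ n := Nat.le_of_dvd hn h5n
      have ha0 : a = 0 := by
        by_contra ha'
        have h3dvd : (3:ℤ) ∣ (cyclotomic n ℤ).eval (p:ℤ) := by
          rw [h]; exact Dvd.dvd.mul_right (dvd_pow_self 3 ha') _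
        have hm3 := (ordCompl_dvd_sub_one_of_dvd_cyclotomic_eval_s15 (q := 3) (by norm_num) hn h3dvd).1
        have hcompl : ordCompl[3] n = n := by
          rw [Nat.factorization_eq_zero_of_not_dvd h3n, pow_zero, Nat.div_one]
        rw [hcompl] at hm3
        have := Nat.le_of_dvd (by norm_num) hm3
        omega
      subst ha0
      rw [pow_zero, one_mul] at h
      have hb : 0 < b := by
        rcases Nat.eq_zero_or_pos b with rfl | hb
        · exfalso
          rw [pow_zero] at h
          have hg := sub_one_lt_cyclotomic_eval_int (m := n) (by omega) hx2
          rw [h] at hg; omega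
        · exact hb
      have h5dvd : (5:ℤ) ∣ (cyclotomic n ℤ).eval (p:ℤ) := by
        rw [h]; exact dvd_pow_self 5 hb.ne'
      obtain ⟨hm5, hp5⟩ := ordCompl_dvd_sub_one_of_dvd_cyclotomic_eval_s15 (q := 5) (by norm_num) hn h5dvd
      have hproot := primroot_of_dvd_cyclotomic_eval (q := 5) (by norm_num) hn h5dvd
      set k := n.factorization 5 with hk
      have hk1 : 1 ≤ k := Nat.Prime.factorization_pos_of_dvd (by norm_num) hn.ne' h5n
      set m := ordCompl[5] n with hmdef
      have hself : 5 ^ k * m = n := Nat.ordProj_mul_ordCompl_eq_self n 5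
      have hmpos : 0 < m := Nat.ordCompl_pos 5 hn.ne'
      clear_value k m
      have hpow5 : (5:ℕ) ^ k = 5 * 5 ^ (k - 1) := by
        rw [← pow_succ']; congr 1; omega
      have hnt : n = 5 * (5 ^ (k-1) * m) := by
        rw [← hself, hpow5]; ring
      have ht5 : n / 5 = 5 ^ (k-1) * m := by
        conv_lhs => rw [hnt]
        exact Nat.mul_div_cancel_left _ (by norm_num)
      have hmdvd : m ∣ n / 5 := by rw [ht5]; exact Dvd.intro_left _ rfl
      have hy5 : (5:ℤ) ∣ (p:ℤ) ^ (n/5) - 1 := by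
        obtain ⟨s, hs⟩ := hmdvd
        have hpow : (((p:ℤ) : ZMod 5)) ^ (n/5) = 1 := by
          rw [hs, pow_mul, hproot.pow_eq_one, one_pow]
        have hcast : (((p:ℤ) ^ (n/5) - 1 : ℤ) : ZMod 5) = 0 := by
          push_cast at hpow ⊢
          rw [hpow]; ring
        exact_mod_cast (ZMod.intCast_zmod_eq_zero_iff_dvd _ 5).mp hcast
      have h25 := not_twentyfive_dvd_cyclotomic_eval hx2 h5n hn hy5
      have hb1 : b = 1 := by
        by_contra hb2
        have h25d : (25:ℤ) ∣ 5 ^ b := by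
          calc (25:ℤ) = 5 ^ 2 := by norm_num
            _ ∣ 5 ^ b := pow_dvd_pow 5 (by omega)
        exact h25 (by rw [h]; exact h25d)
      rw [hb1, pow_one] at h
      exfalso
      rcases Nat.lt_or_ge k 2 with hklt | hk2
      · -- k = 1, n ∈ {5, 10, 20}
        have hkeq : k = 1 := by omega
        have hm4 : m ∣ 4 := by norm_num at hm5; exact hm5
        have hmle : m ≤ 4 := Nat.le_of_dvd (by norm_num) hm4
        have hm124 : m = 1 ∨ m = 2 ∨ m = 4 := by interval_cases m <;> omega
        have hself' : 5 * m = n := by rw [hkeq, pow_one] at hself; exact hself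
        have hn520 : n = 5 ∨ n = 10 ∨ n = 20 := by omega
        have hplt := sub_one_lt_cyclotomic_eval_int (m := n) (by omega) hx2
        rw [h] at hplt
        have hple : p ≤ 5 := by
          have : (p:ℤ) ≤ 5 := by omega
          exact_mod_cast this
        have hpne5 : p ≠ 5 := by
          intro hp5'
          apply hp5
          rw [hp5']
        have hp23 : p = 2 ∨ p = 3 ∨ p = 4 := by omega
        rcases hp23 with rfl | rfl | rfl
        · push_cast at h
          rcases hn520 with rfl | rfl | rfl
          · rw [eval_two_cyclotomic_five] at h; norm_num at h
          · rw [eval_two_cyclotomic_ten] at h; norm_num at h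
          · rw [eval_two_cyclotomic_twenty] at h; norm_num at h
        · push_cast at h
          have hbig := sub_one_pow_totient_lt_cyclotomic_eval_int (m := n) (by omega)
            (y := (3:ℤ)) (by norm_num)
          rw [h] at hbig
          norm_num at hbig
          rcases hn520 with rfl | rfl | rfl
          · rw [(by decide : Nat.totient 5 = 4)] at hbig; norm_num at hbig
          · rw [(by decide : Nat.totient 10 = 4)] at hbig; norm_num at hbig
          · rw [(by decide : Nat.totient 20 = 8)] at hbig; norm_num at hbig
        · norm_num at hp
      · -- k ≥ 2 : size contradiction
        have h5t : 5 ∣ n / 5 := by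
          rw [ht5]; exact Dvd.dvd.mul_right (dvd_pow_self 5 (by omega)) m
        have ht2 : 2 ≤ n / 5 := by
          have := Nat.le_of_dvd (by omega) h5t
          omega
        have hexp := cyclotomic_expand_eq_cyclotomic (by norm_num : Nat.Prime 5) h5t ℤ
        have hneq : n / 5 * 5 = n := Nat.div_mul_cancel h5n
        have heval : (cyclotomic n ℤ).eval (p:ℤ) = (cyclotomic (n/5) ℤ).eval ((p:ℤ)^5) := by
          conv_lhs => rw [← hneq]
          rw [← hexp, expand_eval]
        have h32 : (32:ℤ) ≤ (p:ℤ)^5 := by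
          calc (32:ℤ) = 2^5 := by norm_num
            _ ≤ (p:ℤ)^5 := pow_le_pow_left₀ (by norm_num) hx2 5
        have hy2 : (2:ℤ) ≤ (p:ℤ)^5 := by linarith
        have hbig := sub_one_lt_cyclotomic_eval_int (m := n/5) ht2 hy2
        rw [← heval, h] at hbig
        linarith
    · -- Case I : ¬ 3 ∣ n, ¬ 5 ∣ n
      have hcompl3 : ordCompl[3] n = n := by
        rw [Nat.factorization_eq_zero_of_not_dvd h3n, pow_zero, Nat.div_one]
      have hcompl5 : ordCompl[5] n = n := by
        rw [Nat.factorization_eq_zero_of_not_dvd h5n, pow_zero, Nat.div_one]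
      have hn124 : n = 1 ∨ n = 2 ∨ n = 4 := by
        rcases Nat.eq_zero_or_pos a with rfl | ha
        · rcases Nat.eq_zero_or_pos b with rfl | hb
          · left
            by_contra hne
            have hg := sub_one_lt_cyclotomic_eval_int (m := n) (by omega) hx2
            rw [h] at hg; norm_num at hg; omega
          · have h5dvd : (5:ℤ) ∣ (cyclotomic n ℤ).eval (p:ℤ) := by
              rw [h]; exact Dvd.dvd.mul_left (dvd_pow_self 5 hb.ne') _
            have hm5 := (ordCompl_dvd_sub_one_of_dvd_cyclotomic_eval_s15 (q := 5) (by norm_num) hn h5dvd).1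
            rw [hcompl5] at hm5
            norm_num at hm5
            have := Nat.le_of_dvd (by norm_num) hm5
            interval_cases n <;> omega
        · have h3dvd : (3:ℤ) ∣ (cyclotomic n ℤ).eval (p:ℤ) := by
            rw [h]; exact Dvd.dvd.mul_right (dvd_pow_self 3 ha.ne') _
          have hm3 := (ordCompl_dvd_sub_one_of_dvd_cyclotomic_eval_s15 (q := 3) (by norm_num) hn h3dvd).1
          rw [hcompl3] at hm3
          norm_num at hm3
          have := Nat.le_of_dvd (by norm_num) hm3
          interval_cases n <;> omega
      have hpeq : p = 2 := by
        rcases hp.eq_two_or_odd' with rfl | hodd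
        · rfl
        · exfalso
          have hoddx : Odd ((p:ℤ)) := by exact_mod_cast hodd
          have hoddev : Odd ((cyclotomic n ℤ).eval (p:ℤ)) := by rw [h]; exact hoddR
          rcases hn124 with rfl | rfl | rfl
          · rw [cyclotomic_one] at hoddev
            simp only [eval_sub, eval_X, eval_one] at hoddev
            exact (Int.not_odd_iff_even.mpr (hoddx.sub_odd odd_one)) hoddev
          · rw [cyclotomic_two] at hoddev
            simp only [eval_add, eval_X, eval_one] at hoddev
            exact (Int.not_odd_iff_even.mpr hoddx.add_one) hoddev
          · have e4 : (cyclotomic 4 ℤ).eval (p:ℤ) = (p:ℤ)^2 + 1 := by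
              have hexp := cyclotomic_expand_eq_cyclotomic Nat.prime_two (dvd_refl 2) ℤ
              rw [(by norm_num : (4:ℕ) = 2*2), ← hexp, expand_eval, cyclotomic_two]
              simp
            rw [e4] at hoddev
            exact (Int.not_odd_iff_even.mpr (hoddx.pow).add_one) hoddev
      refine ⟨hpeq, ?_⟩
      rcases hn124 with rfl | rfl | rfl <;> simp
end

section
/- Let q be a prime power. If q² − 1 = 2^a · 3^b for some nonnegative integers a and b, then q ∈ {2, 3, 5, 7, 17}. -/
private lemma pow2_add_two (c d : ℕ) (h : 2 ^ d = 2 ^ c + 2) : c = 1 ∧ d = 2 := by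
  have hc : c ≤ 1 := by
    by_contra hc
    push_neg at hc
    have h4c : (4:ℕ) ∣ 2 ^ c := by
      have : (2:ℕ) ^ 2 ∣ 2 ^ c := pow_dvd_pow 2 (by omega)
      simpa using this
    have h4cle : 4 ≤ 2 ^ c := Nat.le_of_dvd (pow_pos (by norm_num) c) h4c
    have hd2 : 2 ≤ d := by
      by_contra hd
      push_neg at hd
      have : 2 ^ d ≤ 2 ^ 1 := Nat.pow_le_pow_right (by norm_num) (by omega)
      omega
    have h4d : (4:ℕ) ∣ 2 ^ d := by
      have : (2:ℕ) ^ 2 ∣ 2 ^ d := pow_dvd_pow 2 hd2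
      simpa using this
    omega
  interval_cases c
  · exfalso
    rcases d with _ | d
    · norm_num at h
    · have : 2 ∣ 2 ^ (d + 1) := dvd_pow_self 2 (by omega)
      omega
  · refine ⟨rfl, ?_⟩
    have h2 : 2 ^ d = 2 ^ 2 := by norm_num at h ⊢; omega
    exact Nat.pow_right_injective (le_refl 2) h2

private lemma three_pow_eq_two_pow_add_one (b k : ℕ) (h : 3 ^ b = 2 ^ k + 1) :
    (b = 1 ∧ k = 1) ∨ (b = 2 ∧ k = 3) := by
  rcases k with _ | _ | _ | k
  · exfalso
    rcases b with _ | b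
    · norm_num at h
    · have : 3 ∣ 3 ^ (b + 1) := dvd_pow_self 3 (by omega)
      omega
  · left
    refine ⟨?_, rfl⟩
    have h3 : 3 ^ b = 3 ^ 1 := by norm_num at h ⊢; omega
    exact Nat.pow_right_injective (by norm_num) h3
  · exfalso
    rcases b with _ | b
    · norm_num at h
    · have : 3 ∣ 3 ^ (b + 1) := dvd_pow_self 3 (by omega)
      norm_num at h
      omega
  · -- k + 3 ≥ 3
    right
    have h8 : 2 ^ (k + 1 + 1 + 1) = 8 * 2 ^ k := by ring
    rcases Nat.even_or_odd b with ⟨r, hr⟩ | ⟨r, hr⟩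
    · subst hr
      have hx : 3 ^ (r + r) = 3 ^ r * 3 ^ r := by rw [← pow_add]
      have hx1 : 1 ≤ 3 ^ r := Nat.one_le_pow _ _ (by norm_num)
      have hprod : (3 ^ r - 1) * (3 ^ r + 1) = 2 ^ (k + 1 + 1 + 1) := by
        zify [hx1]
        have hz : ((3:ℤ) ^ r) * 3 ^ r = 2 ^ (k + 1 + 1 + 1) + 1 := by
          exact_mod_cast (hx ▸ h)
        nlinarith [hz]
      obtain ⟨i, hi, hxi⟩ := (Nat.dvd_prime_pow Nat.prime_two).1
        (⟨3 ^ r + 1, hprod.symm⟩ : (3 ^ r - 1) ∣ 2 ^ (k + 1 + 1 + 1))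
      obtain ⟨j, hj, hxj⟩ := (Nat.dvd_prime_pow Nat.prime_two).1
        (⟨3 ^ r - 1, by rw [← hprod]; ring⟩ : (3 ^ r + 1) ∣ 2 ^ (k + 1 + 1 + 1))
      have hij : 2 ^ j = 2 ^ i + 2 := by omega
      obtain ⟨hi1, hj2⟩ := pow2_add_two i j hij
      subst hi1
      norm_num at hxi
      have hx3 : 3 ^ r = 3 ^ 1 := by omega
      have hr1 : r = 1 := Nat.pow_right_injective (by norm_num) hx3
      subst hr1
      have hk8 : 2 ^ (k + 1 + 1 + 1) = 8 := by omega
      have hk0 : 2 ^ k = 1 := by omega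
      have : k = 0 := by
        rcases k with _ | k
        · rfl
        · exfalso
          have : 2 ∣ 2 ^ (k + 1) := dvd_pow_self 2 (by omega)
          omega
      omega
    · exfalso
      subst hr
      have h9 : 9 ^ r % 8 = 1 := by
        rw [Nat.pow_mod]; norm_num
      have e9 : 3 ^ (2 * r + 1) = 9 ^ r * 3 := by
        rw [pow_succ, pow_mul]; norm_num
      have h' : 9 ^ r * 3 = 2 ^ (k + 1 + 1 + 1) + 1 := by rw [← e9]; exact h
      omega

private lemma two_pow_eq_three_pow_add_one (k b : ℕ) (h : 2 ^ k = 3 ^ b + 1)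
    (hb : 1 ≤ b) : k = 2 ∧ b = 1 := by
  have h3 : 3 ∣ 3 ^ b := dvd_pow_self 3 (by omega)
  rcases Nat.even_or_odd k with ⟨s, hs⟩ | ⟨s, hs⟩
  · subst hs
    have e : 2 ^ (s + s) = 2 ^ s * 2 ^ s := by rw [← pow_add]
    have hx1 : 1 ≤ 2 ^ s := Nat.one_le_two_pow
    have hprod : (2 ^ s - 1) * (2 ^ s + 1) = 3 ^ b := by
      zify [hx1]
      have hz : ((2:ℤ) ^ s) * 2 ^ s = 3 ^ b + 1 := by exact_mod_cast (e ▸ h)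
      nlinarith [hz]
    obtain ⟨i, hi, hxi⟩ := (Nat.dvd_prime_pow Nat.prime_three).1
      (⟨2 ^ s + 1, hprod.symm⟩ : (2 ^ s - 1) ∣ 3 ^ b)
    obtain ⟨j, hj, hxj⟩ := (Nat.dvd_prime_pow Nat.prime_three).1
      (⟨2 ^ s - 1, by rw [← hprod]; ring⟩ : (2 ^ s + 1) ∣ 3 ^ b)
    have hij : 3 ^ j = 3 ^ i + 2 := by omega
    have hi0 : i = 0 := by
      rcases i with _ | i
      · rfl
      · exfalso
        rcases j with _ | j
        · norm_num at hij
        · have d1 : 3 ∣ 3 ^ (i + 1) := dvd_pow_self 3 (by omega)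
          have d2 : 3 ∣ 3 ^ (j + 1) := dvd_pow_self 3 (by omega)
          omega
    subst hi0
    norm_num at hxi
    have hs2 : 2 ^ s = 2 ^ 1 := by omega
    have hs1 : s = 1 := Nat.pow_right_injective (le_refl 2) hs2
    subst hs1
    norm_num at h
    refine ⟨rfl, ?_⟩
    have hb3 : 3 ^ b = 3 ^ 1 := by omega
    exact Nat.pow_right_injective (by norm_num) hb3
  · exfalso
    subst hs
    have e4 : 2 ^ (2 * s + 1) = 4 ^ s * 2 := by
      rw [pow_succ, pow_mul]; norm_num
    have h4 : 4 ^ s % 3 = 1 := by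
      rw [Nat.pow_mod]; norm_num
    have h' : 4 ^ s * 2 = 3 ^ b + 1 := by rw [← e4]; exact h
    omega

private lemma smooth_of_dvd (d a b : ℕ) (h : d ∣ 2 ^ a * 3 ^ b) :
    ∃ i j, d = 2 ^ i * 3 ^ j := by
  obtain ⟨d1, d2, h1, h2, rfl⟩ := (Nat.dvd_mul).1 h
  obtain ⟨i, _, rfl⟩ := (Nat.dvd_prime_pow Nat.prime_two).1 h1
  obtain ⟨j, _, rfl⟩ := (Nat.dvd_prime_pow Nat.prime_three).1 h2
  exact ⟨i, j, rfl⟩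

/-- If `q` is a prime power and `q² - 1 = 2^a * 3^b` for some nonnegative integers `a, b`,
then `q ∈ {2, 3, 5, 7, 17}`. -/
theorem primePow_sq_sub_one_two_pow_mul_three_pow (q : ℕ) (hq : IsPrimePow q)
    (h : ∃ a b : ℕ, q ^ 2 - 1 = 2 ^ a * 3 ^ b) :
    q ∈ ({2, 3, 5, 7, 17} : Set ℕ) := by
  obtain ⟨a, b, h⟩ := h
  have hq2 : 2 ≤ q := hq.two_le
  have hsq : 1 ≤ q ^ 2 := Nat.one_le_pow _ _ (by omega)
  have e : 2 ^ a * 3 ^ b = (q - 1) * (q + 1) := by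
    rw [← h]
    zify [hsq, show 1 ≤ q by omega]
    ring
  obtain ⟨a1, b1, hm1⟩ := smooth_of_dvd (q - 1) a b ⟨q + 1, e⟩
  obtain ⟨a2, b2, hn1⟩ := smooth_of_dvd (q + 1) a b ⟨q - 1, by rw [e]; ring⟩
  have E : 2 ^ a2 * 3 ^ b2 = 2 ^ a1 * 3 ^ b1 + 2 := by omega
  simp only [Set.mem_insert_iff, Set.mem_singleton_iff]
  rcases Nat.eq_zero_or_pos b1 with hb1 | hb1 <;>
    rcases Nat.eq_zero_or_pos b2 with hb2 | hb2
  · -- b1 = 0, b2 = 0 : powers of 2 differing by 2, q = 3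
    subst hb1; subst hb2
    simp only [pow_zero, mul_one] at E
    obtain ⟨ha1, ha2⟩ := pow2_add_two a1 a2 E
    subst ha1
    norm_num at hm1
    omega
  · -- b1 = 0, b2 ≥ 1 : q ∈ {2, 5, 17}
    subst hb1
    simp only [pow_zero, mul_one] at E
    rcases a2 with _ | a2
    · -- q + 1 = 3^b2
      simp only [pow_zero, one_mul] at E hn1
      rcases a1 with _ | a1
      · -- 3^b2 = 3, q = 2
        norm_num at E
        omega
      · exfalso
        have hd : 2 ∣ 2 ^ (a1 + 1) := dvd_pow_self 2 (by omega)
        have hodd : ¬ (2 ∣ 3 ^ b2) := by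
          intro hd2
          have := Nat.Prime.dvd_of_dvd_pow Nat.prime_two hd2
          omega
        omega
    · -- a2 ≥ 1
      rcases a1 with _ | _ | c
      · -- 2^a2 * 3^b2 = 3 but LHS even
        exfalso
        have hd : 2 ∣ 2 ^ (a2 + 1) * 3 ^ b2 :=
          dvd_mul_of_dvd_left (dvd_pow_self 2 (by omega)) _
        norm_num at E
        omega
      · -- 2^a2 * 3^b2 = 4 but 3 divides LHS
        exfalso
        have hd : 3 ∣ 2 ^ (a2 + 1) * 3 ^ b2 :=
          Dvd.dvd.mul_left (dvd_pow_self 3 (by omega)) _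
        norm_num at E
        omega
      · -- a1 = c + 2
        have e4 : 2 ^ (c + 1 + 1) = 4 * 2 ^ c := by ring
        have ha2' : a2 = 0 := by
          by_contra hne
          have h4L : 4 ∣ 2 ^ (a2 + 1) * 3 ^ b2 := by
            refine dvd_mul_of_dvd_left ?_ _
            have : (2:ℕ) ^ 2 ∣ 2 ^ (a2 + 1) := pow_dvd_pow 2 (by omega)
            simpa using this
          omega
        subst ha2'
        have e2 : 2 ^ (0 + 1) * 3 ^ b2 = 2 * 3 ^ b2 := by ring
        have e3 : 2 ^ (c + 1) = 2 * 2 ^ c := by ring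
        have key : 3 ^ b2 = 2 ^ (c + 1) + 1 := by omega
        rcases three_pow_eq_two_pow_add_one b2 (c + 1) key with ⟨hb, hk⟩ | ⟨hb, hk⟩
        · -- c = 0, q - 1 = 4, q = 5
          have hc0 : c = 0 := by omega
          subst hc0
          norm_num at hm1
          omega
        · -- c = 2, q - 1 = 16, q = 17
          have hc2 : c = 2 := by omega
          subst hc2
          norm_num at hm1
          omega
  · -- b1 ≥ 1, b2 = 0 : q = 7
    subst hb2
    simp only [pow_zero, mul_one] at E
    have hodd : ¬ (2 ∣ 3 ^ b1) := by
      intro hd2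
      have := Nat.Prime.dvd_of_dvd_pow Nat.prime_two hd2
      omega
    rcases a1 with _ | _ | c
    · -- a1 = 0 : 2^a2 = 3^b1 + 2, parity contradiction
      exfalso
      simp only [pow_zero, one_mul] at E
      have hb3 : 3 ≤ 3 ^ b1 := Nat.le_self_pow (by omega) 3
      rcases a2 with _ | a2
      · norm_num at E
      · have hd : 2 ∣ 2 ^ (a2 + 1) := dvd_pow_self 2 (by omega)
        omega
    · -- a1 = 1 : 2^a2 = 2*3^b1 + 2
      have e2 : 2 ^ 1 * 3 ^ b1 = 2 * 3 ^ b1 := by ring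
      have hb3 : 3 ≤ 3 ^ b1 := Nat.le_self_pow (by omega) 3
      rcases a2 with _ | a2
      · exfalso
        norm_num at E
      · have e5 : 2 ^ (a2 + 1) = 2 * 2 ^ a2 := by ring
        have key : 2 ^ a2 = 3 ^ b1 + 1 := by omega
        obtain ⟨hk, hb⟩ := two_pow_eq_three_pow_add_one a2 b1 key (by omega)
        subst hk; subst hb
        norm_num at hm1
        omega
    · -- a1 ≥ 2 : contradiction mod 4
      exfalso
      have h4c : (4:ℕ) ∣ 2 ^ (c + 1 + 1) * 3 ^ b1 := by
        refine dvd_mul_of_dvd_left ?_ _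
        have : (2:ℕ) ^ 2 ∣ 2 ^ (c + 1 + 1) := pow_dvd_pow 2 (by omega)
        simpa using this
      have hb3 : 3 ≤ 3 ^ b1 := Nat.le_self_pow (by omega) 3
      have hc4 : 4 ≤ 2 ^ (c + 1 + 1) := by
        have : (2:ℕ) ^ 2 ≤ 2 ^ (c + 1 + 1) := Nat.pow_le_pow_right (by norm_num) (by omega)
        simpa using this
      have hprodge : 12 ≤ 2 ^ (c + 1 + 1) * 3 ^ b1 := by
        calc (12:ℕ) = 4 * 3 := by norm_num
        _ ≤ 2 ^ (c + 1 + 1) * 3 ^ b1 := Nat.mul_le_mul hc4 hb3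
      have ha2 : 2 ≤ a2 := by
        by_contra hle
        have : 2 ^ a2 ≤ 2 ^ 1 := Nat.pow_le_pow_right (by norm_num) (by omega)
        omega
      have h4d : (4:ℕ) ∣ 2 ^ a2 := by
        have : (2:ℕ) ^ 2 ∣ 2 ^ a2 := pow_dvd_pow 2 ha2
        simpa using this
      omega
  · -- b1 ≥ 1, b2 ≥ 1 : 3 divides 2, contradiction
    exfalso
    have d1 : 3 ∣ 2 ^ a1 * 3 ^ b1 := Dvd.dvd.mul_left (dvd_pow_self 3 (by omega)) _
    have d2 : 3 ∣ 2 ^ a2 * 3 ^ b2 := Dvd.dvd.mul_left (dvd_pow_self 3 (by omega)) _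
    omega
end

section
/- Let q be a prime power. If q² − 1 = 3^a · 5^b for some nonnegative integers a and b, then q ∈ {2, 4}. -/
lemma pow3mod8 (x : ℕ) : 3 ^ x % 8 = 1 ∨ 3 ^ x % 8 = 3 := by
  induction x with
  | zero => left; rfl
  | succ n ih => rw [pow_succ]; omega

lemma pow5mod4 (y : ℕ) : 5 ^ y % 4 = 1 := by
  induction y with
  | zero => rfl
  | succ n ih => rw [pow_succ]; omega

/-- If `q` is a prime power and `q² - 1 = 3^a * 5^b` for some nonnegative integers `a, b`,
then `q ∈ {2, 4}`. -/
theorem primePow_sq_sub_one_three_pow_mul_five_pow (q : ℕ) (hq : IsPrimePow q)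
    (h : ∃ a b : ℕ, q ^ 2 - 1 = 3 ^ a * 5 ^ b) :
    q ∈ ({2, 4} : Set ℕ) := by
  obtain ⟨a, b, h⟩ := h
  have hq2 : 2 ≤ q := hq.two_le
  have heq : (q + 1) * (q - 1) = 3 ^ a * 5 ^ b := by
    rw [← h, ← Nat.sq_sub_sq]
  have hq4 : 4 ≤ q ^ 2 := by
    calc (4:ℕ) = 2 ^ 2 := by norm_num
    _ ≤ q ^ 2 := Nat.pow_le_pow_left hq2 2
  have hodd : (q ^ 2 - 1) % 2 = 1 := by
    rw [h]; simp [Nat.mul_mod, Nat.pow_mod]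
  have hq_even : q % 2 = 0 := by
    rcases Nat.even_or_odd q with he | ho
    · exact Nat.even_iff.mp he
    · exfalso
      have h1 : q ^ 2 % 2 = 1 := by
        rw [Nat.pow_mod, Nat.odd_iff.mp ho]
      omega
  obtain ⟨p, k, hp, hk, rfl⟩ := hq
  have hp' : p.Prime := Nat.prime_iff.mpr hp
  have h2p : p = 2 := by
    have h2 : 2 ∣ p ^ k := by omega
    have := Nat.prime_two.dvd_of_dvd_pow h2
    exact ((Nat.prime_dvd_prime_iff_eq Nat.prime_two hp').mp this).symm
  subst h2p
  have hk1 : 1 ≤ k := hk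
  have h2k : 2 ≤ 2 ^ k := by
    have : (2:ℕ) ^ 1 ≤ 2 ^ k := Nat.pow_le_pow_right (by norm_num) hk1
    simpa using this
  have hd1 : (2 ^ k - 1) ∣ 3 ^ a * 5 ^ b := ⟨2 ^ k + 1, by rw [← heq]; ring⟩
  have hd2 : (2 ^ k + 1) ∣ 3 ^ a * 5 ^ b := ⟨2 ^ k - 1, by rw [← heq]⟩
  by_cases h3 : 3 ∣ 2 ^ k - 1 <;> by_cases h5 : 5 ∣ 2 ^ k - 1
  · -- 3 and 5 both divide 2^k - 1, so neither divides 2^k + 1 and 2^k + 1 = 1 : absurd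
    exfalso
    have h3' : ¬ 3 ∣ 2 ^ k + 1 := by omega
    have h5' : ¬ 5 ∣ 2 ^ k + 1 := by omega
    have hc : Nat.Coprime (2 ^ k + 1) (3 ^ a * 5 ^ b) :=
      Nat.Coprime.mul_right
        (((Nat.Prime.coprime_iff_not_dvd Nat.prime_three).mpr h3').symm.pow_right a)
        (((Nat.Prime.coprime_iff_not_dvd Nat.prime_five).mpr h5').symm.pow_right b)
    have h1 : 2 ^ k + 1 = 1 := Nat.Coprime.eq_one_of_dvd hc hd2
    omega
  · -- 2^k - 1 = 3^x, 2^k + 1 = 5^y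
    have hc5 : Nat.Coprime (2 ^ k - 1) (5 ^ b) :=
      ((Nat.Prime.coprime_iff_not_dvd Nat.prime_five).mpr h5).symm.pow_right b
    have hdvd1 : (2 ^ k - 1) ∣ 3 ^ a := hc5.dvd_of_dvd_mul_right hd1
    obtain ⟨x, hxa, hx⟩ := (Nat.dvd_prime_pow Nat.prime_three).mp hdvd1
    have h3' : ¬ 3 ∣ 2 ^ k + 1 := by omega
    have hc3 : Nat.Coprime (2 ^ k + 1) (3 ^ a) :=
      ((Nat.Prime.coprime_iff_not_dvd Nat.prime_three).mpr h3').symm.pow_right a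
    have hdvd2 : (2 ^ k + 1) ∣ 5 ^ b := hc3.dvd_of_dvd_mul_left hd2
    obtain ⟨y, hyb, hy⟩ := (Nat.dvd_prime_pow Nat.prime_five).mp hdvd2
    by_cases hk3 : 3 ≤ k
    · exfalso
      have h8 : (8:ℕ) ∣ 2 ^ k := by
        have : (2:ℕ) ^ 3 ∣ 2 ^ k := pow_dvd_pow 2 hk3
        norm_num at this; exact this
      rcases pow3mod8 x with hm | hm <;> omega
    · interval_cases k
      · exfalso
        have := pow5mod4 y
        norm_num at hy
        omega
      · right; norm_num
  · -- 2^k - 1 = 5^y, 2^k + 1 = 3^x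
    exfalso
    have h5' : ¬ 5 ∣ 2 ^ k + 1 := by omega
    have hc3 : Nat.Coprime (2 ^ k - 1) (3 ^ a) :=
      ((Nat.Prime.coprime_iff_not_dvd Nat.prime_three).mpr h3).symm.pow_right a
    have hdvd1 : (2 ^ k - 1) ∣ 5 ^ b := hc3.dvd_of_dvd_mul_left hd1
    obtain ⟨y, hyb, hy⟩ := (Nat.dvd_prime_pow Nat.prime_five).mp hdvd1
    have hy4 := pow5mod4 y
    by_cases hk2 : 2 ≤ k
    · have h4 : (4:ℕ) ∣ 2 ^ k := by
        have : (2:ℕ) ^ 2 ∣ 2 ^ k := pow_dvd_pow 2 hk2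
        norm_num at this; exact this
      omega
    · interval_cases k
      norm_num at h5
  · -- neither 3 nor 5 divides 2^k - 1, so 2^k - 1 = 1, q = 2
    have hc : Nat.Coprime (2 ^ k - 1) (3 ^ a * 5 ^ b) :=
      Nat.Coprime.mul_right
        (((Nat.Prime.coprime_iff_not_dvd Nat.prime_three).mpr h3).symm.pow_right a)
        (((Nat.Prime.coprime_iff_not_dvd Nat.prime_five).mpr h5).symm.pow_right b)
    have h1 : 2 ^ k - 1 = 1 := Nat.Coprime.eq_one_of_dvd hc hd1
    simp only [Set.mem_insert_iff, Set.mem_singleton_iff]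
    omega
end

section
/- Let p be an odd prime and n an integer with p + p < n. Let x be a p-cycle in the alternating group Alt_n. Then the commuting graph on the conjugacy class of x in Alt_n is connected. -/
open SimpleGraph

/-!
Two `p`-cycles whose supports together leave at least `p` points free both commute with a
`p`-cycle on those free points, which lies in `Alt_n` because `p` is odd. As `2p < n`, this
joins any two `p`-cycles whose supports differ in at most one point, and exchanging the support
of one `p`-cycle for that of another one point at a time joins any two. The `Alt_n`-class of a
`p`-cycle is the set of all `p`-cycles, since it is centralised by an odd permutation: the
transposition of two of its fixed points.
-/

open Equiv Equiv.Perm Finset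

theorem SimpleGraph.reachable_commGraph_of_commute {G : Type*} [Group G] {X : Set G} {a b : X}
    (h : Commute (a : G) b) : (commGraph X).Reachable a b := by
  by_cases hab : a = b
  · exact hab ▸ Reachable.refl a
  · exact Adj.reachable ⟨hab, h⟩

theorem Finset.exists_card_sdiff_le_one_and_card_sdiff_eq {α : Type*} [DecidableEq α]
    {s t : Finset α} {k : ℕ} (hst : #s = #t) (hk : #(s \ t) = k + 1) :
    ∃ u : Finset α, #u = #s ∧ #(s \ u) ≤ 1 ∧ #(u \ t) = k := by
  obtain ⟨b, hb⟩ : (s \ t).Nonempty := card_pos.mp (by omega)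
  obtain ⟨a, ha⟩ : (t \ s).Nonempty := card_pos.mp (by rw [← card_sdiff_comm hst]; omega)
  rw [mem_sdiff] at ha
  refine ⟨insert a (s.erase b), ?_, ?_, ?_⟩
  · rw [card_insert_of_notMem fun h => ha.2 (mem_of_mem_erase h),
      card_erase_add_one (mem_sdiff.mp hb).1]
  · refine (card_le_card fun c => ?_).trans (card_singleton b).le
    simp only [mem_sdiff, mem_insert, mem_erase, mem_singleton]
    tauto
  · have : insert a (s.erase b) \ t = (s \ t).erase b := by
      ext c
      simp only [mem_sdiff, mem_insert, mem_erase]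
      constructor
      · rintro ⟨rfl | h, hc⟩ <;> tauto
      · tauto
    rw [this, card_erase_of_mem hb, hk, Nat.add_sub_cancel]

namespace Equiv.Perm

variable {α : Type*} [DecidableEq α] [Fintype α]

theorem exists_isCycle_support_eq {s : Finset α} (hs : 2 ≤ #s) :
    ∃ c : Perm α, c.IsCycle ∧ c.support = s := by
  refine ⟨s.toList.formPerm, List.isCycle_formPerm s.nodup_toList (by simpa using hs), ?_⟩
  rw [List.support_formPerm_of_nodup _ s.nodup_toList, toList_toFinset]
  intro a ha
  have := congrArg List.length ha
  rw [Finset.length_toList, List.length_singleton] at this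
  omega

theorem IsCycle.mem_alternatingGroup {c : Perm α} (hc : c.IsCycle) (hodd : Odd #c.support) :
    c ∈ alternatingGroup α := by
  rw [Perm.mem_alternatingGroup, hc.sign, hodd.neg_one_pow, neg_neg]

end Equiv.Perm

variable {α : Type*} [DecidableEq α] [Fintype α] {p : ℕ}

def alternatingCycles (α : Type*) [DecidableEq α] [Fintype α] (p : ℕ) :
    Set (alternatingGroup α) :=
  {y | (y : Perm α).IsCycle ∧ #(y : Perm α).support = p}

theorem exists_mem_alternatingCycles_support_eq (hp : 2 ≤ p) (hodd : Odd p) {s : Finset α}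
    (hs : #s = p) : ∃ y ∈ alternatingCycles α p, (y : Perm α).support = s := by
  obtain ⟨c, hc, rfl⟩ := exists_isCycle_support_eq (hs ▸ hp)
  exact ⟨⟨c, hc.mem_alternatingGroup (hs ▸ hodd)⟩, ⟨hc, hs⟩, rfl⟩

theorem reachable_commGraph_alternatingCycles_of_card_sdiff_add_le (hp : 2 ≤ p) (hodd : Odd p)
    {y z : alternatingCycles α p}
    (h : #((y : Perm α).support \ (z : Perm α).support) + p + p ≤ Fintype.card α) :
    (commGraph (alternatingCycles α p)).Reachable y z := by
  have hfree : p ≤ #((y : Perm α).support ∪ (z : Perm α).support)ᶜ := by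
    rw [card_compl, ← card_sdiff_add_card, z.2.2]
    omega
  obtain ⟨s, hs, hsp⟩ := exists_subset_card_eq hfree
  obtain ⟨w, hw, hws⟩ := exists_mem_alternatingCycles_support_eq hp hodd hsp
  have hdisj : Disjoint ((y : Perm α).support ∪ (z : Perm α).support) (w : Perm α).support :=
    hws ▸ disjoint_compl_right.mono_right hs
  rw [disjoint_union_left] at hdisj
  have hcomm {u v : alternatingGroup α}
      (huv : Disjoint (u : Perm α).support (v : Perm α).support) : Commute u v :=
    Subtype.ext (disjoint_iff_disjoint_support.mpr huv).commute.eq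
  exact (reachable_commGraph_of_commute (b := ⟨w, hw⟩) (hcomm hdisj.1)).trans
    (reachable_commGraph_of_commute (hcomm hdisj.2.symm))

theorem reachable_commGraph_alternatingCycles (hp : 2 ≤ p) (hodd : Odd p)
    (hn : p + p < Fintype.card α) (y z : alternatingCycles α p) :
    (commGraph (alternatingCycles α p)).Reachable y z := by
  induction hk : #((y : Perm α).support \ (z : Perm α).support) generalizing y with
  | zero => exact reachable_commGraph_alternatingCycles_of_card_sdiff_add_le hp hodd (by omega)
  | succ k ih =>
    obtain ⟨s, hsp, hys, hsz⟩ :=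
      exists_card_sdiff_le_one_and_card_sdiff_eq (y.2.2.trans z.2.2.symm) hk
    obtain ⟨w, hw, rfl⟩ := exists_mem_alternatingCycles_support_eq hp hodd (hsp.trans y.2.2)
    exact (reachable_commGraph_alternatingCycles_of_card_sdiff_add_le hp hodd (z := ⟨w, hw⟩)
      (by dsimp only; omega)).trans (ih ⟨w, hw⟩ hsz)

theorem commGraph_alternatingCycles_connected (hp : 2 ≤ p) (hodd : Odd p)
    (hn : p + p < Fintype.card α) : (commGraph (alternatingCycles α p)).Connected := by
  obtain ⟨s, -, hs⟩ := exists_subset_card_eq (s := (univ : Finset α)) (n := p)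
    (by rw [card_univ]; omega)
  obtain ⟨y, hy, -⟩ := exists_mem_alternatingCycles_support_eq hp hodd hs
  exact (connected_iff_exists_forall_reachable _).mpr
    ⟨⟨y, hy⟩, reachable_commGraph_alternatingCycles hp hodd hn _⟩

theorem setOf_isConj_eq_alternatingCycles {x : alternatingGroup α} (hx : (x : Perm α).IsCycle)
    (hn : #(x : Perm α).support + 2 ≤ Fintype.card α) :
    {y | IsConj x y} = alternatingCycles α #(x : Perm α).support := by
  ext y
  constructor
  · intro (h : IsConj x y)
    obtain ⟨c, hc⟩ := isConj_iff.mp ((alternatingGroup α).subtype.map_isConj h)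
    simp only [Subgroup.subtype_apply] at hc
    exact ⟨hc ▸ hx.conj, hc ▸ card_support_conj⟩
  · rintro ⟨hy, hcard⟩
    exact alternatingGroup.isConj_of ((hx.isConj_iff hy).mpr hcard.symm) hn

theorem commGraph_conjClass_pCycle_connected_general
    (p n : ℕ) (hodd : Odd p) (hn : p + p < n)
    (x : Equiv.Perm (Fin n)) (hcyc : x.IsCycle) (hcard : x.support.card = p)
    (hx : x ∈ alternatingGroup (Fin n)) :
    (commGraph {y : ↥(alternatingGroup (Fin n)) |
        IsConj (⟨x, hx⟩ : ↥(alternatingGroup (Fin n))) y}).Connected := by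
  have hp : 2 ≤ p := hcard ▸ hcyc.two_le_card_support
  have hfix : p + 2 ≤ Fintype.card (Fin n) := by rw [Fintype.card_fin]; omega
  rw [setOf_isConj_eq_alternatingCycles (x := ⟨x, hx⟩) hcyc (hcard ▸ hfix), hcard]
  exact commGraph_alternatingCycles_connected hp hodd (by rwa [Fintype.card_fin])

/-- Let `p` be an odd prime and `n` an integer with `p + p < n`. Then for any `p`-cycle `x`
in the alternating group `Alt_n`, the commuting graph on the conjugacy class of `x` in
`Alt_n` is connected. -/
theorem commGraph_conjClass_pCycle_connected
    (p n : ℕ) (hp : p.Prime) (hodd : Odd p) (hn : p + p < n)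
    (x : Equiv.Perm (Fin n)) (hcyc : x.IsCycle) (hcard : x.support.card = p)
    (hx : x ∈ alternatingGroup (Fin n)) :
    (commGraph {y : ↥(alternatingGroup (Fin n)) |
        IsConj (⟨x, hx⟩ : ↥(alternatingGroup (Fin n))) y}).Connected :=
  commGraph_conjClass_pCycle_connected_general p n hodd hn x hcyc hcard hx
end
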